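/- arXiv:0908.3750 — 4 statements merged into one kernel-verified Lean document; each statement's English description precedes it below -/
import Mathlib

section
/- Let X = R·S_d where R is a nonnegative random variable with distribution function F_R, independent of S_d which is uniformly distributed on the unit simplex in ℝ₊^d. Then the survival function of X satisfies P(X > x) = 𝔚_d F_R(‖max(x,0)‖₁) + F_R(0)·1{x < 0} for all x ∈ ℝ^d, where 𝔚_d F_R is the Williamson d-transform of F_R. -/
/-!
By independence, `P(X > x) = E[φ(R)]` with `φ(r) = P(r • S_d > x)`. For `r > 0` the event is
`S_d > x / r`; for `r = 0` it is the deterministic event `x < 0`. So everything reduces to the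
survival function `P(S_d > t) = (1 - ‖t₊‖₁)₊^(d-1)`.

For `t ≥ 0` with `‖t‖₁ < 1`, the part `{s > t}` of the hyperplane `∑ s = 1` is the image of the
open simplex `{s > 0}` under the homothety `s ↦ t + (1 - ‖t‖₁) • s`, so its `(d-1)`-dimensional
Hausdorff measure is `(1 - ‖t‖₁)^(d-1)` times that of the open simplex. The open simplex has full
measure in the closed one, because the closed simplex lies in every `{s > -ε}`, a copy of the open
simplex scaled by `1 + dε`. On the open simplex, `s > t` iff `s > t₊`.
-/

open Set MeasureTheory ProbabilityTheory Filter

noncomputable section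

/-- The uniform distribution on the unit simplex `{x ∈ ℝ₊^d : ‖x‖₁ = 1}`: the normalized
restriction of the `(d-1)`-dimensional Hausdorff measure to the simplex. -/
def uniformSimplex (d : ℕ) : Measure (Fin d → ℝ) :=
  ProbabilityTheory.cond (MeasureTheory.Measure.hausdorffMeasure ((d : ℝ) - 1))
    {x | (∀ i, 0 ≤ x i) ∧ ∑ i, x i = 1}

open scoped Pointwise Topology

section Simplex

variable {ι : Type*} [Fintype ι]

def simplexAbove (t : ι → ℝ) : Set (ι → ℝ) := {s | (∀ i, t i < s i) ∧ ∑ i, s i = 1}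

lemma measurableSet_simplexAbove (t : ι → ℝ) : MeasurableSet (simplexAbove t) := by
  unfold simplexAbove
  measurability

lemma simplexAbove_subset_stdSimplex {t : ι → ℝ} (ht : 0 ≤ t) :
    simplexAbove t ⊆ stdSimplex ℝ ι :=
  fun _ hs => ⟨fun i => (ht i).trans (hs.1 i).le, hs.2⟩

lemma stdSimplex_subset_simplexAbove {ε : ℝ} (hε : 0 < ε) :
    stdSimplex ℝ ι ⊆ simplexAbove fun _ => -ε :=
  fun _ hs => ⟨fun i => (neg_lt_zero.2 hε).trans_le (hs.1 i), hs.2⟩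

lemma simplexAbove_eq_empty {t : ι → ℝ} (ht : 1 ≤ ∑ i, t i) : simplexAbove t = ∅ := by
  refine eq_empty_of_forall_notMem fun s ⟨hts, hs⟩ => ?_
  cases isEmpty_or_nonempty ι
  · simp at hs
  · exact (ht.trans_lt <| hs ▸ Finset.sum_lt_sum_of_nonempty Finset.univ_nonempty
      fun i _ => hts i).false

lemma simplexAbove_eq_vadd_smul {t : ι → ℝ} (ht : ∑ i, t i < 1) :
    simplexAbove t = t +ᵥ (1 - ∑ i, t i) • simplexAbove 0 := by
  have hc : 1 - ∑ i, t i ≠ 0 := by linarith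
  ext s
  rw [mem_vadd_set_iff_neg_vadd_mem, mem_smul_set_iff_inv_smul_mem₀ hc]
  have hc0 : 0 < (1 - ∑ i, t i)⁻¹ := by rw [inv_pos]; linarith
  simp only [simplexAbove, mem_ofPred_eq, Pi.zero_apply, Pi.smul_apply, vadd_eq_add, Pi.add_apply,
    Pi.neg_apply, smul_eq_mul, mul_pos_iff_of_pos_left hc0]
  rw [← Finset.mul_sum, Finset.sum_add_distrib, Finset.sum_neg_distrib, inv_mul_eq_one₀ hc]
  refine and_congr (forall_congr' fun i => ?_) ?_ <;> constructor <;> intro h <;> linarith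

lemma hausdorffMeasure_vadd_smul {E : Type*} [NormedAddCommGroup E] [NormedSpace ℝ E]
    [MeasurableSpace E] [BorelSpace E] {k : ℝ} (hk : 0 ≤ k) (v : E) {c : ℝ} (hc : 0 < c)
    (A : Set E) : μH[k] (v +ᵥ c • A) = ENNReal.ofReal (c ^ k) * μH[k] A := by
  rw [hausdorffMeasure_vadd _ (Or.inl hk), Measure.hausdorffMeasure_smul₀ hk hc.ne',
    ENNReal.smul_def, smul_eq_mul, ENNReal.ofReal, Real.toNNReal_rpow_of_nonneg hc.le,
    Real.toNNReal_of_nonneg hc.le, Real.nnnorm_of_nonneg hc.le]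

variable {k : ℝ}

lemma hausdorffMeasure_simplexAbove (hk : 0 ≤ k) {t : ι → ℝ} (ht : ∑ i, t i < 1) :
    μH[k] (simplexAbove t) =
      ENNReal.ofReal ((1 - ∑ i, t i) ^ k) * μH[k] (simplexAbove (0 : ι → ℝ)) := by
  rw [simplexAbove_eq_vadd_smul ht, hausdorffMeasure_vadd_smul hk _ (by linarith)]

lemma hausdorffMeasure_simplexAbove_zero (hk : 0 ≤ k) :
    μH[k] (simplexAbove (0 : ι → ℝ)) = μH[k] (stdSimplex ℝ ι) := by
  refine le_antisymm (measure_mono (simplexAbove_subset_stdSimplex le_rfl)) ?_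
  set n : ℝ := (Fintype.card ι : ℝ)
  have hn : 0 ≤ n := Nat.cast_nonneg _
  have hratio : Tendsto (fun ε : ℝ => ENNReal.ofReal ((1 + n * ε) ^ k)) (𝓝[>] 0) (𝓝 1) :=
    ((ENNReal.continuous_ofReal.comp ((continuous_const.add
        (continuous_const.mul continuous_id)).rpow_const fun _ => Or.inr hk)).tendsto' 0 1
        (by simp)).mono_left nhdsWithin_le_nhds
  refine ge_of_tendsto (by simpa using ENNReal.Tendsto.mul_const hratio (Or.inl one_ne_zero))
    (eventually_nhdsWithin_of_forall fun ε hε => ?_)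
  have hsum : ∑ _ : ι, -ε = -(n * ε) := by simp [n]
  calc μH[k] (stdSimplex ℝ ι) ≤ μH[k] (simplexAbove fun _ => -ε) :=
        measure_mono (stdSimplex_subset_simplexAbove hε.out)
    _ = _ := by
        rw [hausdorffMeasure_simplexAbove hk (by rw [hsum]; nlinarith [hε.out]), hsum,
          sub_neg_eq_add]

end Simplex

lemma ProbabilityTheory.IndepFun.measureReal_preimage_eq_integral {Ω α β : Type*}
    [MeasurableSpace Ω] [MeasurableSpace α] [MeasurableSpace β] {μ : Measure Ω}
    [IsFiniteMeasure μ] {X : Ω → α} {Y : Ω → β} (hX : Measurable X) (hY : Measurable Y)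
    (hXY : IndepFun X Y μ) {P : Set (α × β)} (hP : MeasurableSet P) :
    μ.real ((fun ω => (X ω, Y ω)) ⁻¹' P) = ∫ ω, (μ.map Y).real (Prod.mk (X ω) ⁻¹' P) ∂μ := by
  have hslice : Measurable fun a => μ.map Y (Prod.mk a ⁻¹' P) := measurable_measure_prodMk_left hP
  calc μ.real ((fun ω => (X ω, Y ω)) ⁻¹' P)
      = (∫⁻ ω, μ.map Y (Prod.mk (X ω) ⁻¹' P) ∂μ).toReal := by
        rw [measureReal_def, ← Measure.map_apply (hX.prodMk hY) hP,
          (indepFun_iff_map_prod_eq_prod_map_map hX.aemeasurable hY.aemeasurable).1 hXY,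
          Measure.prod_apply hP, lintegral_map hslice hX]
    _ = _ := (integral_toReal (hslice.comp hX).aemeasurable
        (ae_of_all _ fun _ => measure_lt_top _ _)).symm

/-- `𝔚_d F(a) = ∫ williamsonKernel d a r dF(r)`. -/
def williamsonKernel (d : ℕ) (a r : ℝ) : ℝ := if a < r then (1 - a / r) ^ (d - 1) else 0

lemma abs_williamsonKernel_le_one (d : ℕ) {a : ℝ} (ha : 0 ≤ a) (r : ℝ) :
    |williamsonKernel d a r| ≤ 1 := by
  unfold williamsonKernel
  split_ifs with h
  · have hr : 0 < r := ha.trans_lt h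
    have h0 : 0 ≤ 1 - a / r := sub_nonneg.2 ((div_le_one hr).2 h.le)
    rw [abs_of_nonneg (pow_nonneg h0 _)]
    exact pow_le_one₀ h0 (sub_le_self _ (div_nonneg ha hr.le))
  · simp

lemma measurable_williamsonKernel (d : ℕ) (a : ℝ) : Measurable (williamsonKernel d a) := by
  unfold williamsonKernel
  exact Measurable.ite measurableSet_Ioi (by fun_prop) measurable_const

section UniformSimplex

variable {d : ℕ}

lemma uniformSimplex_apply (A : Set (Fin d → ℝ)) :
    uniformSimplex d A = (μH[(d : ℝ) - 1] (stdSimplex ℝ (Fin d)))⁻¹ *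
      μH[(d : ℝ) - 1] (stdSimplex ℝ (Fin d) ∩ A) :=
  cond_apply (isClosed_stdSimplex ℝ (Fin d)).measurableSet _ A

variable [IsProbabilityMeasure (uniformSimplex d)]

lemma hausdorffMeasure_stdSimplex_ne_zero_and_ne_top :
    μH[(d : ℝ) - 1] (stdSimplex ℝ (Fin d)) ≠ 0 ∧ μH[(d : ℝ) - 1] (stdSimplex ℝ (Fin d)) ≠ ⊤ := by
  have := IsProbabilityMeasure.ne_zero (uniformSimplex d)
  rw [uniformSimplex, Ne, cond_eq_zero] at this
  tauto

lemma one_le_of_isProbabilityMeasure_uniformSimplex : 1 ≤ d := by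
  obtain ⟨s, hs⟩ :=
    nonempty_of_measure_ne_zero (hausdorffMeasure_stdSimplex_ne_zero_and_ne_top (d := d)).1
  refine Nat.one_le_iff_ne_zero.2 fun hd => ?_
  subst hd
  simp [stdSimplex] at hs

lemma uniformSimplex_setOf_lt (t : Fin d → ℝ) :
    uniformSimplex d {s | ∀ i, t i < s i} =
      if ∑ i, max (t i) 0 < 1 then ENNReal.ofReal ((1 - ∑ i, max (t i) 0) ^ (d - 1)) else 0 := by
  obtain ⟨h0, htop⟩ := hausdorffMeasure_stdSimplex_ne_zero_and_ne_top (d := d)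
  have hd := one_le_of_isProbabilityMeasure_uniformSimplex (d := d)
  have hk : (0 : ℝ) ≤ d - 1 := by simpa using (Nat.one_le_cast (α := ℝ)).2 hd
  have hopen : simplexAbove 0 =ᵐ[μH[(d : ℝ) - 1]] stdSimplex ℝ (Fin d) :=
    ae_eq_of_subset_of_measure_ge (simplexAbove_subset_stdSimplex le_rfl)
      (hausdorffMeasure_simplexAbove_zero hk).ge (measurableSet_simplexAbove 0).nullMeasurableSet
      htop
  have hcut : simplexAbove 0 ∩ {s | ∀ i, t i < s i} = simplexAbove fun i => max (t i) 0 := by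
    ext s
    simp only [simplexAbove, mem_inter_iff, mem_ofPred_eq, Pi.zero_apply, max_lt_iff]
    grind
  rw [uniformSimplex_apply, ← measure_congr (hopen.inter (ae_eq_refl {s | ∀ i, t i < s i})),
    hcut]
  split_ifs with ht
  · rw [hausdorffMeasure_simplexAbove hk ht, hausdorffMeasure_simplexAbove_zero hk,
      mul_left_comm, ENNReal.inv_mul_cancel h0 htop, mul_one, ← Nat.cast_one, ← Nat.cast_sub hd,
      Real.rpow_natCast]
  · rw [simplexAbove_eq_empty (not_lt.1 ht), measure_empty, mul_zero]

lemma uniformSimplex_real_setOf_lt_smul (x : Fin d → ℝ) {r : ℝ} (hr : 0 ≤ r) :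
    (uniformSimplex d).real {s | ∀ i, x i < r * s i} =
      williamsonKernel d (∑ i, max (x i) 0) r +
        (Iic 0).indicator (fun _ => if ∀ i, x i < 0 then 1 else 0) r := by
  have ha : 0 ≤ ∑ i, max (x i) 0 := Finset.sum_nonneg fun i _ => le_max_right _ _
  rcases hr.eq_or_lt with rfl | hr
  · rw [williamsonKernel, if_neg ha.not_gt, indicator_of_mem (mem_Iic.2 le_rfl), zero_add]
    by_cases hx : ∀ i, x i < 0 <;> simp [hx]
  · have hscale : {s : Fin d → ℝ | ∀ i, x i < r * s i} = {s | ∀ i, x i / r < s i} := by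
      ext s
      exact forall_congr' fun i => (div_lt_iff₀' hr).symm
    have hsum : ∑ i, max (x i / r) 0 = (∑ i, max (x i) 0) / r := by
      rw [Finset.sum_div]
      exact Finset.sum_congr rfl fun i _ => by rw [← max_div_div_right hr.le, zero_div]
    rw [indicator_of_notMem (notMem_Iic.2 hr), add_zero, hscale, measureReal_def,
      uniformSimplex_setOf_lt, hsum, williamsonKernel]
    simp_rw [div_lt_one hr]
    split_ifs with h
    · exact ENNReal.toReal_ofReal (pow_nonneg (sub_nonneg.2 ((div_le_one hr).2 h.le)) _)
    · rfl

end UniformSimplex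

theorem stmt9_general {Ω : Type*} [MeasurableSpace Ω] (μ : Measure Ω) [IsProbabilityMeasure μ]
    (d : ℕ) (R : Ω → ℝ) (S : Ω → Fin d → ℝ)
    (hRm : Measurable R) (hSm : Measurable S) (hR0 : ∀ ω, 0 ≤ R ω)
    (hSlaw : μ.map S = uniformSimplex d)
    (hind : ProbabilityTheory.IndepFun R S μ) :
    ∀ x : Fin d → ℝ,
      (μ {ω | ∀ i, x i < R ω * S ω i}).toReal =
        (∫ ω, (if (∑ i, max (x i) 0) < R ω
            then (1 - (∑ i, max (x i) 0) / R ω) ^ (d - 1) else 0) ∂μ)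
        + (μ {ω | R ω ≤ 0}).toReal * (if ∀ i, x i < 0 then 1 else 0) := by
  intro x
  have : IsProbabilityMeasure (uniformSimplex d) :=
    hSlaw ▸ Measure.isProbabilityMeasure_map hSm.aemeasurable
  have hP : MeasurableSet {p : ℝ × (Fin d → ℝ) | ∀ i, x i < p.1 * p.2 i} := by measurability
  set a := ∑ i, max (x i) 0
  have ha : 0 ≤ a := Finset.sum_nonneg fun i _ => le_max_right _ _
  set c : ℝ := if ∀ i, x i < 0 then 1 else 0
  have hkernel : Integrable (fun ω => williamsonKernel d a (R ω)) μ :=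
    .of_bound ((measurable_williamsonKernel d a).comp hRm).aestronglyMeasurable 1
      (ae_of_all _ fun ω => abs_williamsonKernel_le_one d ha (R ω))
  calc (μ {ω | ∀ i, x i < R ω * S ω i}).toReal
      = ∫ ω, (uniformSimplex d).real {s | ∀ i, x i < R ω * s i} ∂μ := by
        rw [← hSlaw]; exact hind.measureReal_preimage_eq_integral hRm hSm hP
    _ = ∫ ω, williamsonKernel d a (R ω) + (R ⁻¹' Iic 0).indicator (fun _ => c) ω ∂μ := by
        refine integral_congr_ae (ae_of_all _ fun ω => ?_)
        beta_reduce
        rw [uniformSimplex_real_setOf_lt_smul x (hR0 ω), ← indicator_comp_right]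
        rfl
    _ = _ := by
        rw [integral_add hkernel ((integrable_const c).indicator (hRm measurableSet_Iic)),
          integral_indicator_const c (hRm measurableSet_Iic), smul_eq_mul]
        rfl

/-- Survival function of an `ℓ₁`-norm symmetric distribution `X = R·S_d`:
`P(X > x) = 𝔚_d F_R(‖max(x,0)‖₁) + F_R(0)·1{x < 0}`, where the Williamson `d`-transform
of `F_R` at `t` is written as the expectation `E[(1 - t/R)₊^(d-1) 1{R > t}]`. -/
theorem stmt9 {Ω : Type*} [MeasurableSpace Ω] (μ : Measure Ω) [IsProbabilityMeasure μ]
    (d : ℕ) (hd : 2 ≤ d) (R : Ω → ℝ) (S : Ω → Fin d → ℝ)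
    (hRm : Measurable R) (hSm : Measurable S) (hR0 : ∀ ω, 0 ≤ R ω)
    (hSlaw : μ.map S = uniformSimplex d)
    (hind : ProbabilityTheory.IndepFun R S μ) :
    ∀ x : Fin d → ℝ,
      (μ {ω | ∀ i, x i < R ω * S ω i}).toReal =
        (∫ ω, (if (∑ i, max (x i) 0) < R ω
            then (1 - (∑ i, max (x i) 0) / R ω) ^ (d - 1) else 0) ∂μ)
        + (μ {ω | R ω ≤ 0}).toReal * (if ∀ i, x i < 0 then 1 else 0) :=
  stmt9_general μ d R S hRm hSm hR0 hSlaw hind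
end
end

section
/- Let 0 < a < b and f_{a,b}(x) = (ab/(b-a)) x^{-2} on [a,b] (zero elsewhere), the density of the reciprocal of a Uniform[b⁻¹, a⁻¹] random variable. Then the Williamson d-transform of this distribution is ψ_{a,b}(x) = (ab/(x d (b-a))) · [(1 - x/b)₊^d - (1 - x/a)₊^d] for x > 0, with ψ_{a,b}(0) = 1. -/
open Set MeasureTheory

/-! For `n ≥ 2` the map `u ↦ u₊ⁿ` is `C¹` with derivative `n u₊ⁿ⁻¹`, so by the chain rule
`t ↦ (1 - x/t)₊ᵈ` is an antiderivative of `d (x/t²) (1 - x/t)₊ᵈ⁻¹` on `(0, ∞)`. The transform is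
therefore a constant times a difference of values of this antiderivative at `b` and `a`, and the
total mass is `∫ₐᵇ t⁻² dt = a⁻¹ - b⁻¹`. -/

theorem hasDerivAt_max_zero_pow {n : ℕ} (hn : 2 ≤ n) (u : ℝ) :
    HasDerivAt (fun v : ℝ => max v 0 ^ n) (n * max u 0 ^ (n - 1)) u := by
  -- off `0` the function is locally `0` or `vⁿ`; at `0` the derivative extends continuously
  refine hasDerivAt_of_hasDerivAt_of_ne' (f := fun v : ℝ => max v 0 ^ n)
    (g := fun v : ℝ => n * max v 0 ^ (n - 1)) (x := 0) (fun y hy => ?_) (by fun_prop)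
    (by fun_prop) u
  rcases hy.lt_or_gt with hneg | hpos
  · rw [max_eq_right hneg.le, zero_pow (by omega), mul_zero]
    refine (hasDerivAt_const y 0).congr_of_eventuallyEq ?_
    filter_upwards [Iio_mem_nhds hneg] with v hv
    rw [max_eq_right (le_of_lt hv), zero_pow (by omega)]
  · rw [max_eq_left hpos.le]
    refine (hasDerivAt_pow n y).congr_of_eventuallyEq ?_
    filter_upwards [Ioi_mem_nhds hpos] with v hv
    rw [max_eq_left (le_of_lt hv)]

theorem hasDerivAt_max_one_sub_div_pow {n : ℕ} (hn : 2 ≤ n) (x : ℝ) {t : ℝ} (ht : t ≠ 0) :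
    HasDerivAt (fun s : ℝ => max (1 - x / s) 0 ^ n)
      (n * max (1 - x / t) 0 ^ (n - 1) * (x / t ^ 2)) t := by
  have hinner : HasDerivAt (fun s : ℝ => 1 - x / s) (x / t ^ 2) t := by
    simpa [div_eq_mul_inv] using ((hasDerivAt_inv ht).const_mul x).const_sub 1
  exact (hasDerivAt_max_zero_pow hn _).comp t hinner

theorem integral_deriv_max_one_sub_div_pow {n : ℕ} (hn : 2 ≤ n) (x : ℝ) {a b : ℝ}
    (h : (0 : ℝ) ∉ uIcc a b) :
    ∫ t in a..b, n * max (1 - x / t) 0 ^ (n - 1) * (x / t ^ 2)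
      = max (1 - x / b) 0 ^ n - max (1 - x / a) 0 ^ n := by
  have hne : ∀ t ∈ uIcc a b, t ≠ 0 := fun t ht h0 => h (h0 ▸ ht)
  refine intervalIntegral.integral_eq_sub_of_hasDerivAt
    (fun t ht => hasDerivAt_max_one_sub_div_pow hn x (hne t ht)) ?_
  exact ContinuousOn.intervalIntegrable (by fun_prop (disch := intro t ht; simp [hne t ht]))

theorem integral_inv_sq {a b : ℝ} (h : (0 : ℝ) ∉ uIcc a b) :
    ∫ t in a..b, (t ^ 2)⁻¹ = a⁻¹ - b⁻¹ := by
  have h_zpow := integral_zpow (n := -2) (Or.inr ⟨by norm_num, h⟩)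
  norm_num at h_zpow
  rw [h_zpow]; ring

/-- The Williamson `d`-transform of the distribution with density
`f_{a,b}(t) = (ab/(b-a)) t⁻²` on `[a,b]` (the reciprocal of a `Uniform[1/b, 1/a]` variable)
is `ψ_{a,b}(x) = (ab/(x d (b-a)))·((1 - x/b)₊^d - (1 - x/a)₊^d)` for `x > 0`, and
`ψ_{a,b}(0) = 1` (the density integrates to one). -/
theorem stmt14 (d : ℕ) (hd : 2 ≤ d) (a b : ℝ) (ha : 0 < a) (hab : a < b) :
    (∀ x : ℝ, 0 < x →
      ∫ t in Set.Icc a b, a * b / (b - a) / t ^ 2 * max (1 - x / t) 0 ^ (d - 1)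
        = a * b / (x * d * (b - a)) *
            (max (1 - x / b) 0 ^ d - max (1 - x / a) 0 ^ d)) ∧
    ∫ t in Set.Icc a b, a * b / (b - a) / t ^ 2 = 1 := by
  have h0 : (0 : ℝ) ∉ uIcc a b := by
    rw [uIcc_of_le hab.le]; exact fun h => ha.not_ge h.1
  simp only [integral_Icc_eq_integral_Ioc, ← intervalIntegral.integral_of_le hab.le]
  constructor
  · intro x hx
    rw [← integral_deriv_max_one_sub_div_pow hd x h0, ← intervalIntegral.integral_const_mul]
    refine intervalIntegral.integral_congr fun t _ => ?_
    have hd0 : (d : ℝ) ≠ 0 := by positivity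
    field_simp
  · simp_rw [div_eq_mul_inv (a * b / (b - a)), intervalIntegral.integral_const_mul,
      integral_inv_sq h0]
    have hba : b - a ≠ 0 := sub_ne_zero.2 hab.ne'
    have hb : b ≠ 0 := (ha.trans hab).ne'
    field_simp
end

section
/- Let C be the bivariate margin of a d-dimensional Archimedean copula (so its generator ψ is d-monotone). Then Kendall's tau of C satisfies τ(C) ≥ -1/(2d-3). In particular, for the generator ψ_d^L(x) = (1-x)₊^{d-1}, equality holds: τ = -1/(2d-3). -/
open Set MeasureTheory ProbabilityTheory Filter

noncomputable section

/-- `f` is `d`-monotone on `[0,∞)`: continuous on `[0,∞)`, derivatives up to order `d-2`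
exist on `(0,∞)` with `(-1)^k f^(k) ≥ 0`, and `(-1)^(d-2) f^(d-2)` is nonincreasing and
convex on `(0,∞)`. -/
def DMonotoneOn (d : ℕ) (f : ℝ → ℝ) : Prop :=
  ContinuousOn f (Set.Ici 0) ∧
  (∀ k, k + 2 < d → ∀ x ∈ Set.Ioi (0:ℝ), DifferentiableAt ℝ (iteratedDeriv k f) x) ∧
  (∀ k, k + 2 ≤ d → ∀ x ∈ Set.Ioi (0:ℝ), 0 ≤ (-1:ℝ)^k * iteratedDeriv k f x) ∧
  AntitoneOn (fun x => (-1:ℝ)^(d-2) * iteratedDeriv (d-2) f x) (Set.Ioi 0) ∧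
  ConvexOn ℝ (Set.Ioi 0) (fun x => (-1:ℝ)^(d-2) * iteratedDeriv (d-2) f x)

/-- An Archimedean generator: a continuous nonincreasing function `ψ : [0,∞) → [0,1]`
with `ψ 0 = 1`, `ψ(∞) = 0`, strictly decreasing where it is positive. -/
def IsArchGen (ψ : ℝ → ℝ) : Prop :=
  ContinuousOn ψ (Set.Ici 0) ∧ AntitoneOn ψ (Set.Ici 0) ∧ ψ 0 = 1 ∧
  Filter.Tendsto ψ Filter.atTop (nhds 0) ∧ (∀ x ∈ Set.Ici (0:ℝ), 0 ≤ ψ x ∧ ψ x ≤ 1) ∧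
  StrictAntiOn ψ {x | 0 ≤ x ∧ 0 < ψ x}

/-- Generalized inverse of an Archimedean generator, with the convention
`ψ⁻¹ 0 = inf {x | ψ x = 0}`. -/
def psiInv (ψ : ℝ → ℝ) (u : ℝ) : ℝ := sInf {x | 0 ≤ x ∧ ψ x ≤ u}

/-!
Write `d = m + 2` and `φⱼ = (-1)ʲ ψ⁽ʲ⁾`. Integrating the ladder `φⱼ' = -φⱼ₊₁` down from the
nonincreasing density `r = -(φₘ)'₊`, and slicing `r` into its superlevel sets
`{r > a} = (0, R a)`, gives a Williamson representation
`ψ t = ∫_{a > 0} (R a - t)₊^(m+1) / (m+1)! da`. Hence `|ψ'(t)| ≤ ∫ (R a - t)₊^m / m! da`, and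
letting `t → 0` the mass `∫ R a^(m+1) / (m+1)! da` is at most `sup ψ ≤ 1`.
By Minkowski's integral inequality in `L²(t dt)`, `∫ t ψ'(t)² dt` is at most the square of
`∫ ‖(R a - ·)₊^m / m!‖ da`, and each of these norms equals `√((m+1) / (2(2m+1)))` times
`R a^(m+1) / (m+1)!`. So `∫ t ψ'² ≤ (m+1) / (2(2m+1))`, i.e. `τ ≥ -1/(2m+1) = -1/(2d-3)`.
The generator `(1 - x)₊^(m+1)` is a single kernel with `R = 1`, for which all these bounds are
equalities.
-/

open scoped ENNReal Nat Topology

/-- For `k = 0` this is the indicator of `t ≤ x`, not `max (x - t) 0 ^ 0 = 1`. -/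
def truncPow (k : ℕ) (x t : ℝ) : ℝ≥0∞ :=
  if t ≤ x then ENNReal.ofReal ((x - t) ^ k / k !) else 0

lemma measurable_truncPow (k : ℕ) : Measurable (Function.uncurry (truncPow k)) :=
  Measurable.ite (measurableSet_le measurable_snd measurable_fst)
    (((measurable_fst.sub measurable_snd).pow_const k).div_const _).ennreal_ofReal measurable_const

lemma truncPow_eq_ofReal_max {k : ℕ} (hk : k ≠ 0) (x t : ℝ) :
    truncPow k x t = ENNReal.ofReal (max (x - t) 0 ^ k / k !) := by
  unfold truncPow
  split_ifs with h
  · rw [max_eq_left (sub_nonneg.2 h)]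
  · rw [max_eq_right (by linarith), zero_pow hk, zero_div, ENNReal.ofReal_zero]

lemma truncPow_one (x t : ℝ) : truncPow 1 x t = ENNReal.ofReal (x - t) := by
  rw [truncPow_eq_ofReal_max one_ne_zero, pow_one, Nat.factorial_one, Nat.cast_one, div_one,
    ENNReal.ofReal_max, ENNReal.ofReal_zero, max_eq_left zero_le]

lemma setLIntegral_Ioi_ite_le {g : ℝ → ℝ} {t x : ℝ} (htx : t ≤ x) (hg : ContinuousOn g (Icc t x))
    (hg0 : ∀ u ∈ Ioc t x, 0 ≤ g u) :
    ∫⁻ u in Ioi t, (if u ≤ x then ENNReal.ofReal (g u) else 0) =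
      ENNReal.ofReal (∫ u in t..x, g u) := by
  have hind : (fun u => if u ≤ x then ENNReal.ofReal (g u) else 0) =
      (Iic x).indicator (fun u => ENNReal.ofReal (g u)) := by
    ext u; simp [indicator_apply]
  rw [hind, lintegral_indicator measurableSet_Iic, Measure.restrict_restrict measurableSet_Iic,
    Iic_inter_Ioi, intervalIntegral.integral_of_le htx, ofReal_integral_eq_lintegral_ofReal]
  · exact hg.integrableOn_Icc.mono_set Ioc_subset_Icc_self
  · exact (ae_restrict_iff' measurableSet_Ioc).2 (ae_of_all _ hg0)

lemma setLIntegral_Ioi_truncPow (k : ℕ) (x t : ℝ) :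
    ∫⁻ u in Ioi t, truncPow k x u = truncPow (k + 1) x t := by
  rcases le_or_gt t x with htx | hxt
  · simp only [truncPow, if_pos htx]
    rw [setLIntegral_Ioi_ite_le htx (by fun_prop)
      (fun u hu => div_nonneg (pow_nonneg (sub_nonneg.2 hu.2) _) (by positivity))]
    congr 1
    rw [intervalIntegral.integral_div, intervalIntegral.integral_comp_sub_left (fun u => u ^ k),
      integral_pow, Nat.factorial_succ]
    push_cast
    field_simp
    ring
  · rw [truncPow, if_neg hxt.not_ge]
    refine (setLIntegral_congr_fun measurableSet_Ioi fun u hu => ?_).trans lintegral_zero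
    exact if_neg (hxt.trans hu).not_ge

lemma integral_mul_sub_pow_div_factorial_sq (m : ℕ) (x : ℝ) :
    ∫ t in (0:ℝ)..x, t * ((x - t) ^ m / m !) ^ 2 =
      (m + 1) / (2 * (2 * m + 1)) * (x ^ (m + 1) / (m + 1)!) ^ 2 := by
  have h := intervalIntegral.integral_comp_sub_left (a := 0) (b := x)
    (fun u => (x * u ^ (2 * m) - u ^ (2 * m + 1)) / (m ! : ℝ) ^ 2) x
  simp only [sub_self, sub_zero] at h
  rw [show (fun t => t * ((x - t) ^ m / m !) ^ 2) =
      fun t => (x * (x - t) ^ (2 * m) - (x - t) ^ (2 * m + 1)) / (m ! : ℝ) ^ 2 by ext t; ring,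
    h, intervalIntegral.integral_div, intervalIntegral.integral_sub,
    intervalIntegral.integral_const_mul, integral_pow, integral_pow, Nat.factorial_succ]
  · push_cast
    field_simp
    ring
  all_goals exact (by fun_prop : Continuous _).intervalIntegrable _ _

lemma setLIntegral_Ioi_mul_truncPow_sq (m : ℕ) {x : ℝ} (hx : 0 ≤ x) :
    ∫⁻ t in Ioi 0, ENNReal.ofReal t * truncPow m x t ^ 2 =
      ENNReal.ofReal ((m + 1) / (2 * (2 * m + 1))) * truncPow (m + 1) x 0 ^ 2 := by
  have hpt : ∀ t ∈ Ioi (0:ℝ), ENNReal.ofReal t * truncPow m x t ^ 2 =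
      if t ≤ x then ENNReal.ofReal (t * ((x - t) ^ m / m !) ^ 2) else 0 := by
    intro t ht
    unfold truncPow
    split_ifs with htx
    · rw [← ENNReal.ofReal_pow (div_nonneg (pow_nonneg (sub_nonneg.2 htx) _) (by positivity)),
        ← ENNReal.ofReal_mul (le_of_lt ht)]
    · simp
  rw [setLIntegral_congr_fun measurableSet_Ioi hpt, setLIntegral_Ioi_ite_le hx (by fun_prop)
      (fun u hu => mul_nonneg hu.1.le (sq_nonneg _)),
    integral_mul_sub_pow_div_factorial_sq, truncPow, if_pos hx, sub_zero,
    ← ENNReal.ofReal_pow (by positivity), ← ENNReal.ofReal_mul (by positivity)]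

section CauchySchwarz

variable {α β : Type*} [MeasurableSpace α] [MeasurableSpace β]

lemma lintegral_mul_sq_le {ν : Measure β} {f g : β → ℝ≥0∞} (hf : AEMeasurable f ν)
    (hg : AEMeasurable g ν) :
    (∫⁻ t, f t * g t ∂ν) ^ 2 ≤ (∫⁻ t, f t ^ 2 ∂ν) * ∫⁻ t, g t ^ 2 ∂ν := by
  have h := ENNReal.lintegral_mul_le_Lp_mul_Lq ν Real.HolderConjugate.two_two hf hg
  simp only [Pi.mul_apply, ENNReal.rpow_two, one_div] at h
  calc (∫⁻ t, f t * g t ∂ν) ^ 2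
      ≤ ((∫⁻ t, f t ^ 2 ∂ν) ^ (2⁻¹ : ℝ) * (∫⁻ t, g t ^ 2 ∂ν) ^ (2⁻¹ : ℝ)) ^ 2 := by gcongr
    _ = (∫⁻ t, f t ^ 2 ∂ν) * ∫⁻ t, g t ^ 2 ∂ν := by
      have hsqrt (x : ℝ≥0∞) : (x ^ (2⁻¹ : ℝ)) ^ 2 = x := by
        simpa using ENNReal.rpow_inv_natCast_pow two_ne_zero x
      rw [mul_pow, hsqrt, hsqrt]

lemma lintegral_sq_lintegral_le {μ : Measure α} {ν : Measure β} [SFinite μ] [SFinite ν]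
    {k : α → β → ℝ≥0∞} (hk : Measurable (Function.uncurry k)) {N : α → ℝ≥0∞} (hN : Measurable N)
    {C : ℝ≥0∞} (hkN : ∀ a, ∫⁻ t, k a t ^ 2 ∂ν ≤ C * N a ^ 2) :
    ∫⁻ t, (∫⁻ a, k a t ∂μ) ^ 2 ∂ν ≤ C * (∫⁻ a, N a ∂μ) ^ 2 := by
  have hpair : ∀ a b, ∫⁻ t, k a t * k b t ∂ν ≤ C * (N a * N b) := fun a b => by
    rw [← ENNReal.pow_le_pow_left_iff two_ne_zero]
    calc (∫⁻ t, k a t * k b t ∂ν) ^ 2 ≤ (∫⁻ t, k a t ^ 2 ∂ν) * ∫⁻ t, k b t ^ 2 ∂ν :=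
          lintegral_mul_sq_le hk.of_uncurry_left.aemeasurable hk.of_uncurry_left.aemeasurable
      _ ≤ (C * N a ^ 2) * (C * N b ^ 2) := by gcongr <;> apply hkN
      _ = (C * (N a * N b)) ^ 2 := by ring
  have hprod : Measurable fun q : β × α × α => k q.2.1 q.1 * k q.2.2 q.1 :=
    (hk.comp (measurable_snd.fst.prodMk measurable_fst)).mul
      (hk.comp (measurable_snd.snd.prodMk measurable_fst))
  calc ∫⁻ t, (∫⁻ a, k a t ∂μ) ^ 2 ∂ν
      = ∫⁻ t, ∫⁻ p : α × α, k p.1 t * k p.2 t ∂μ.prod μ ∂ν := by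
        congr with t
        rw [sq, lintegral_prod_mul hk.of_uncurry_right.aemeasurable
          hk.of_uncurry_right.aemeasurable]
    _ = ∫⁻ p : α × α, ∫⁻ t, k p.1 t * k p.2 t ∂ν ∂μ.prod μ :=
        lintegral_lintegral_swap hprod.aemeasurable
    _ ≤ ∫⁻ p : α × α, C * (N p.1 * N p.2) ∂μ.prod μ := lintegral_mono fun p => hpair p.1 p.2
    _ = C * (∫⁻ a, N a ∂μ) ^ 2 := by
        rw [lintegral_const_mul C (f := fun p : α × α => N p.1 * N p.2) (by fun_prop),
          lintegral_prod_mul hN.aemeasurable hN.aemeasurable, sq]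

end CauchySchwarz

lemma ofReal_eq_setLIntegral_Ioi_of_hasDerivWithinAt {F G : ℝ → ℝ} {a : ℝ}
    (hF : ContinuousOn F (Ici a)) (hFG : ∀ x ∈ Ioi a, HasDerivWithinAt F (-G x) (Ioi x) x)
    (hGm : Measurable G) (hG : ∀ x ∈ Ioi a, 0 ≤ G x)
    (hGi : ∀ b, a ≤ b → IntervalIntegrable G volume a b)
    (hF0 : Tendsto F atTop (𝓝 0)) :
    ENNReal.ofReal (F a) = ∫⁻ x in Ioi a, ENNReal.ofReal (G x) := by
  have hsegment : ∀ b, a ≤ b →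
      ∫⁻ x in Ioc a b, ENNReal.ofReal (G x) = ENNReal.ofReal (F a - F b) := by
    intro b hab
    have hftc := intervalIntegral.integral_eq_sub_of_hasDeriv_right_of_le hab
      (hF.mono Icc_subset_Ici_self) (fun x hx => hFG x hx.1) (hGi b hab).neg
    rw [intervalIntegral.integral_neg, intervalIntegral.integral_of_le hab] at hftc
    rw [← ofReal_integral_eq_lintegral_ofReal
      ((intervalIntegrable_iff_integrableOn_Ioc_of_le hab).1 (hGi b hab))
      ((ae_restrict_iff' measurableSet_Ioc).2 (ae_of_all _ fun x hx => hG x hx.1))]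
    congr 1
    linarith
  refine ((aecover_Iic tendsto_id).lintegral_eq_of_tendsto _
    hGm.ennreal_ofReal.aemeasurable ?_).symm
  have hlim : Tendsto (fun b => ENNReal.ofReal (F a - F b)) atTop (𝓝 (ENNReal.ofReal (F a))) :=
    ENNReal.tendsto_ofReal (by simpa using tendsto_const_nhds.sub hF0)
  refine hlim.congr' ?_
  filter_upwards [eventually_ge_atTop a] with b hb
  rw [Measure.restrict_restrict measurableSet_Iic, Iic_inter_Ioi, id, hsegment b hb]

lemma tendsto_atTop_zero_of_hasDerivAt_neg {f g : ℝ → ℝ} {a : ℝ}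
    (hfg : ∀ x ∈ Ioi a, HasDerivAt f (-g x) x) (hf : ∀ x ∈ Ioi a, 0 ≤ f x)
    (hg : ∀ x ∈ Ioi a, 0 ≤ g x) (hg_anti : AntitoneOn g (Ioi a)) :
    Tendsto g atTop (𝓝 0) := by
  have hbound : ∀ y, a + 1 < y → g y ≤ f (a + 1) / (y - (a + 1)) := by
    intro y hy
    have hIoi : ∀ x ∈ Icc (a + 1) y, x ∈ Ioi a := fun x hx => mem_Ioi.2 (by linarith [hx.1])
    obtain ⟨c, hc, hslope⟩ := exists_hasDerivAt_eq_slope f (fun x => -g x) hy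
      (fun x hx => (hfg x (hIoi x hx)).continuousAt.continuousWithinAt)
      (fun x hx => hfg x (hIoi x (Ioo_subset_Icc_self hx)))
    have hgc : g y ≤ g c :=
      hg_anti (hIoi c (Ioo_subset_Icc_self hc)) (hIoi y ⟨hy.le, le_rfl⟩) hc.2.le
    rw [eq_div_iff (sub_ne_zero.2 hy.ne')] at hslope
    rw [le_div_iff₀ (sub_pos.2 hy)]
    nlinarith [hf y (hIoi y ⟨hy.le, le_rfl⟩)]
  refine squeeze_zero' (g := fun y => f (a + 1) / (y - (a + 1))) ?_ ?_
    (tendsto_const_nhds.div_atTop (tendsto_atTop_add_const_right _ _ tendsto_id))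
  · filter_upwards [eventually_gt_atTop a] with y hy using hg y hy
  · filter_upwards [eventually_gt_atTop (a + 1)] with y hy using hbound y hy

lemma lintegral_truncPow_zero_le {α : Type*} [MeasurableSpace α] {μ : Measure α} {X : α → ℝ}
    (hX : Measurable X) {k : ℕ} (hk : k ≠ 0) {C : ℝ≥0∞}
    (h : ∀ t > 0, ∫⁻ a, truncPow k (X a) t ∂μ ≤ C) :
    ∫⁻ a, truncPow k (X a) 0 ∂μ ≤ C := by
  have hcont : ∀ x, Continuous (truncPow k x) := fun x => by
    simp_rw [funext (truncPow_eq_ofReal_max hk x)]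
    exact ENNReal.continuous_ofReal.comp (by fun_prop)
  have ht : Tendsto (fun n : ℕ => 1 / ((n : ℝ) + 1)) atTop (𝓝 0) :=
    tendsto_one_div_add_atTop_nhds_zero_nat
  calc ∫⁻ a, truncPow k (X a) 0 ∂μ
      = ∫⁻ a, liminf (fun n : ℕ => truncPow k (X a) (1 / (n + 1))) atTop ∂μ := by
        congr with a
        exact (((hcont (X a)).tendsto 0).comp ht).liminf_eq.symm
    _ ≤ liminf (fun n : ℕ => ∫⁻ a, truncPow k (X a) (1 / (n + 1)) ∂μ) atTop :=
        lintegral_liminf_le fun n => (measurable_truncPow k).comp (hX.prodMk measurable_const)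
    _ ≤ C := liminf_le_of_frequently_le' (Frequently.of_forall fun n => h _ (by positivity))

lemma AntitoneOn.measurable_of_eqOn_compl {f : ℝ → ℝ} {s : Set ℝ} (hs : MeasurableSet s)
    (hf : AntitoneOn f s) (h0 : EqOn f 0 sᶜ) : Measurable f := by
  refine measurable_of_restrict_of_restrict_compl hs
    (Antitone.measurable fun x y hxy => hf x.2 y.2 hxy) ?_
  rw [show sᶜ.domRestrict f = fun _ => 0 from funext fun x => h0 x.2]
  exact measurable_const

section Superlevel

variable {r : ℝ → ℝ} {a s t : ℝ}

/-- For `a > 0` and `r` antitone on `(0, ∞)`, the set `{s > 0 | a < r s}` is an interval with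
left end `0` and right end `superlevelEnd r a`; the value `0` for `a ≤ 0` only serves to make
`superlevelEnd r` measurable. -/
def superlevelEnd (r : ℝ → ℝ) (a : ℝ) : ℝ :=
  if 0 < a then sSup {s | 0 < s ∧ a < r s} else 0

lemma superlevelEnd_nonneg (r : ℝ → ℝ) (a : ℝ) : 0 ≤ superlevelEnd r a := by
  unfold superlevelEnd
  split_ifs
  · exact Real.sSup_nonneg fun s hs => hs.1.le
  · exact le_rfl

lemma le_superlevelEnd (hbdd : BddAbove {s | 0 < s ∧ a < r s}) (ha : 0 < a) (hs : 0 < s)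
    (hrs : a < r s) : s ≤ superlevelEnd r a := by
  rw [superlevelEnd, if_pos ha]
  exact le_csSup hbdd ⟨hs, hrs⟩

lemma lt_of_lt_superlevelEnd (hr : AntitoneOn r (Ioi 0)) (ha : 0 < a) (hs : 0 < s)
    (hsX : s < superlevelEnd r a) : a < r s := by
  rw [superlevelEnd, if_pos ha] at hsX
  have hne : {s | 0 < s ∧ a < r s}.Nonempty := by
    by_contra h
    rw [not_nonempty_iff_eq_empty.1 h, Real.sSup_empty] at hsX
    linarith
  obtain ⟨x, hx, hsx⟩ := exists_lt_of_lt_csSup hne hsX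
  exact hx.2.trans_le (hr hs hx.1 hsx.le)

lemma bddAbove_superlevel_of_setLIntegral_ne_top (hr : AntitoneOn r (Ioi 0)) {c : ℝ} (hc : 0 ≤ c)
    (hfin : ∫⁻ u in Ioi c, ENNReal.ofReal (r u) ≠ ∞) (ha : 0 < a) :
    BddAbove {s | 0 < s ∧ a < r s} := by
  by_contra hunb
  have hle : ∀ u ∈ Ioi c, ENNReal.ofReal a ≤ ENNReal.ofReal (r u) := by
    intro u hu
    obtain ⟨x, hx, hux⟩ := not_bddAbove_iff.1 hunb u
    exact ENNReal.ofReal_le_ofReal (hx.2.le.trans (hr (hc.trans_lt hu) hx.1 hux.le))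
  refine hfin (top_le_iff.1 ((setLIntegral_mono' measurableSet_Ioi hle).trans' ?_))
  rw [setLIntegral_const, Real.volume_Ioi, ENNReal.mul_top (by simpa using ha)]

lemma antitoneOn_superlevelEnd (hbdd : ∀ a > 0, BddAbove {s | 0 < s ∧ a < r s}) :
    AntitoneOn (superlevelEnd r) (Ioi 0) := by
  intro a (ha : 0 < a) b (hb : 0 < b) hab
  rw [superlevelEnd, superlevelEnd, if_pos hb, if_pos ha]
  rcases eq_empty_or_nonempty {s | 0 < s ∧ b < r s} with he | hne
  · rw [he, Real.sSup_empty]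
    exact Real.sSup_nonneg fun s hs => hs.1.le
  · exact csSup_le_csSup (hbdd a ha) hne fun s hs => ⟨hs.1, hab.trans_lt hs.2⟩

lemma measurable_superlevelEnd (hbdd : ∀ a > 0, BddAbove {s | 0 < s ∧ a < r s}) :
    Measurable (superlevelEnd r) :=
  (antitoneOn_superlevelEnd hbdd).measurable_of_eqOn_compl measurableSet_Ioi fun _ ha => if_neg ha

lemma volume_superlevel_inter_Ioi (hr : AntitoneOn r (Ioi 0))
    (hbdd : BddAbove {s | 0 < s ∧ a < r s}) (ha : 0 < a) (ht : 0 ≤ t) :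
    volume ({u | a < r u} ∩ Ioi t) = ENNReal.ofReal (superlevelEnd r a - t) := by
  apply le_antisymm
  · calc volume ({u | a < r u} ∩ Ioi t) ≤ volume (Ioc t (superlevelEnd r a)) :=
          measure_mono fun u hu => ⟨hu.2, le_superlevelEnd hbdd ha (ht.trans_lt hu.2) hu.1⟩
      _ = ENNReal.ofReal (superlevelEnd r a - t) := Real.volume_Ioc
  · calc ENNReal.ofReal (superlevelEnd r a - t) = volume (Ioo t (superlevelEnd r a)) :=
          Real.volume_Ioo.symm
      _ ≤ volume ({u | a < r u} ∩ Ioi t) :=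
          measure_mono fun u hu => ⟨lt_of_lt_superlevelEnd hr ha (ht.trans_lt hu.1) hu.2, hu.1⟩

lemma setLIntegral_Ioi_ofReal_eq_setLIntegral_truncPow (hr : AntitoneOn r (Ioi 0))
    (hrm : Measurable r) (hr0 : ∀ u ∈ Ioi 0, 0 ≤ r u)
    (hbdd : ∀ a > 0, BddAbove {s | 0 < s ∧ a < r s}) (ht : 0 ≤ t) :
    ∫⁻ u in Ioi t, ENNReal.ofReal (r u) = ∫⁻ a in Ioi 0, truncPow 1 (superlevelEnd r a) t := by
  rw [lintegral_eq_lintegral_meas_lt _ ((ae_restrict_iff' measurableSet_Ioi).2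
    (ae_of_all _ fun u hu => hr0 u (ht.trans_lt hu))) hrm.aemeasurable]
  refine setLIntegral_congr_fun measurableSet_Ioi fun a (ha : 0 < a) => ?_
  rw [Measure.restrict_apply' measurableSet_Ioi, volume_superlevel_inter_Ioi hr (hbdd a ha) ha ht,
    truncPow_one]

lemma ofReal_le_setLIntegral_truncPow_zero (hbdd : ∀ a > 0, BddAbove {s | 0 < s ∧ a < r s})
    (ht : 0 < t) :
    ENNReal.ofReal (r t) ≤ ∫⁻ a in Ioi 0, truncPow 0 (superlevelEnd r a) t := by
  calc ENNReal.ofReal (r t) = ∫⁻ _ in Ioo 0 (r t), 1 := by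
        rw [setLIntegral_one, Real.volume_Ioo, sub_zero]
    _ ≤ ∫⁻ a in Ioo 0 (r t), truncPow 0 (superlevelEnd r a) t :=
        setLIntegral_mono' measurableSet_Ioo fun a ha => by
          simp [truncPow, le_superlevelEnd (hbdd a ha.1) ha.1 ht ha.2]
    _ ≤ ∫⁻ a in Ioi 0, truncPow 0 (superlevelEnd r a) t := lintegral_mono_set Ioo_subset_Ioi_self

end Superlevel

section ConvexAntitone

variable {f : ℝ → ℝ} {x t : ℝ}

def negRightDeriv (f : ℝ → ℝ) (x : ℝ) : ℝ := -derivWithin f (Ioi x) x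

lemma measurable_negRightDeriv (f : ℝ → ℝ) : Measurable (negRightDeriv f) :=
  (measurable_derivWithin_Ioi f).neg

lemma ConvexOn.negRightDeriv_nonneg (hf : ConvexOn ℝ (Ioi 0) f) (hf' : AntitoneOn f (Ioi 0))
    (hx : 0 < x) : 0 ≤ negRightDeriv f x := by
  have hx1 : x + 1 ∈ Ioi (0 : ℝ) := mem_Ioi.2 (by linarith)
  have hslope := hf.rightDeriv_le_slope_of_mem_interior (by rwa [interior_Ioi]) hx1 (lt_add_one x)
  rw [slope_def_field, add_sub_cancel_left, div_one] at hslope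
  rw [negRightDeriv, neg_nonneg]
  linarith [hf' (show x ∈ Ioi 0 from hx) hx1 (by linarith)]

lemma ConvexOn.antitoneOn_negRightDeriv (hf : ConvexOn ℝ (Ioi 0) f) :
    AntitoneOn (negRightDeriv f) (Ioi 0) := by
  have h := hf.monotoneOn_rightDeriv.neg
  rwa [interior_Ioi] at h

lemma ConvexOn.ofReal_eq_setLIntegral_negRightDeriv (hf : ConvexOn ℝ (Ioi 0) f)
    (hf' : AntitoneOn f (Ioi 0)) (hf0 : Tendsto f atTop (𝓝 0)) (ht : 0 < t) :
    ENNReal.ofReal (f t) = ∫⁻ u in Ioi t, ENNReal.ofReal (negRightDeriv f u) := by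
  have hsub : Ici t ⊆ Ioi 0 := Ici_subset_Ioi.2 ht
  refine ofReal_eq_setLIntegral_Ioi_of_hasDerivWithinAt ((hf.continuousOn isOpen_Ioi).mono hsub)
    (fun x hx => ?_) (measurable_negRightDeriv f)
    (fun x hx => hf.negRightDeriv_nonneg hf' (ht.trans hx)) (fun b hb => ?_) hf0
  · rw [negRightDeriv, neg_neg]
    exact hf.hasDerivWithinAt_rightDeriv_of_mem_interior (by rw [interior_Ioi]; exact ht.trans hx)
  · refine AntitoneOn.intervalIntegrable (hf.antitoneOn_negRightDeriv.mono ?_)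
    rw [uIcc_of_le hb]
    exact Icc_subset_Ici_self.trans hsub

end ConvexAntitone

def signedIteratedDeriv (j : ℕ) (f : ℝ → ℝ) (x : ℝ) : ℝ := (-1) ^ j * iteratedDeriv j f x

@[simp] lemma signedIteratedDeriv_zero (f : ℝ → ℝ) : signedIteratedDeriv 0 f = f := by
  ext x; simp [signedIteratedDeriv]

lemma measurable_signedIteratedDeriv_succ (j : ℕ) (f : ℝ → ℝ) :
    Measurable (signedIteratedDeriv (j + 1) f) := by
  have hd : Measurable (iteratedDeriv (j + 1) f) := by
    rw [iteratedDeriv_succ]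
    exact measurable_deriv _
  exact hd.const_mul _

/-- The radii of the Williamson representation of `ψ`
(`DMonotoneOn.ofReal_signedIteratedDeriv_eq_setLIntegral_truncPow`), indexed by the level `a`
of the density `-(φₘ)'₊` instead of by a mixing measure. -/
def williamsonRadius (m : ℕ) (ψ : ℝ → ℝ) : ℝ → ℝ :=
  superlevelEnd (negRightDeriv (signedIteratedDeriv m ψ))

namespace DMonotoneOn

variable {m j : ℕ} {ψ : ℝ → ℝ} {x t : ℝ}

lemma hasDerivAt_signedIteratedDeriv (h : DMonotoneOn (m + 2) ψ) (hj : j < m) (hx : 0 < x) :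
    HasDerivAt (signedIteratedDeriv j ψ) (-signedIteratedDeriv (j + 1) ψ x) x := by
  have hd := (h.2.1 j (by omega) x hx).hasDerivAt
  rw [← iteratedDeriv_succ] at hd
  refine (hd.const_mul ((-1 : ℝ) ^ j)).congr_deriv ?_
  simp only [signedIteratedDeriv, pow_succ]
  ring

lemma signedIteratedDeriv_nonneg (h : DMonotoneOn (m + 2) ψ) (hj : j ≤ m) (hx : 0 < x) :
    0 ≤ signedIteratedDeriv j ψ x :=
  h.2.2.1 j (by omega) x hx

lemma convexOn_signedIteratedDeriv (h : DMonotoneOn (m + 2) ψ) :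
    ConvexOn ℝ (Ioi 0) (signedIteratedDeriv m ψ) :=
  h.2.2.2.2

lemma antitoneOn_signedIteratedDeriv (h : DMonotoneOn (m + 2) ψ) (hj : j ≤ m) :
    AntitoneOn (signedIteratedDeriv j ψ) (Ioi 0) := by
  rcases hj.lt_or_eq with hj | rfl
  · refine antitoneOn_of_hasDerivWithinAt_nonpos (f' := fun x => -signedIteratedDeriv (j + 1) ψ x)
      (convex_Ioi 0)
      (fun x hx => (h.hasDerivAt_signedIteratedDeriv hj hx).continuousAt.continuousWithinAt)
      (fun x hx => ?_) (fun x hx => ?_) <;> rw [interior_Ioi] at hx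
    · exact (h.hasDerivAt_signedIteratedDeriv hj hx).hasDerivWithinAt
    · exact neg_nonpos.2 (h.signedIteratedDeriv_nonneg hj hx)
  · exact h.2.2.2.1

lemma continuousOn_signedIteratedDeriv (h : DMonotoneOn (m + 2) ψ) (hj : j ≤ m) :
    ContinuousOn (signedIteratedDeriv j ψ) (Ioi 0) := by
  rcases hj.lt_or_eq with hj | rfl
  · exact fun x hx => (h.hasDerivAt_signedIteratedDeriv hj hx).continuousAt.continuousWithinAt
  · exact h.convexOn_signedIteratedDeriv.continuousOn isOpen_Ioi

lemma tendsto_signedIteratedDeriv (h : DMonotoneOn (m + 2) ψ) (hψ : Tendsto ψ atTop (𝓝 0))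
    (hj : j ≤ m) : Tendsto (signedIteratedDeriv j ψ) atTop (𝓝 0) := by
  cases j with
  | zero => rwa [signedIteratedDeriv_zero]
  | succ j =>
    exact tendsto_atTop_zero_of_hasDerivAt_neg (a := 0)
      (fun x hx => h.hasDerivAt_signedIteratedDeriv hj hx)
      (fun x hx => h.signedIteratedDeriv_nonneg (by omega) hx)
      (fun x hx => h.signedIteratedDeriv_nonneg hj hx) (h.antitoneOn_signedIteratedDeriv hj)

lemma ofReal_signedIteratedDeriv_eq_setLIntegral (h : DMonotoneOn (m + 2) ψ)
    (hψ : Tendsto ψ atTop (𝓝 0)) (hj : j < m) (ht : 0 < t) :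
    ENNReal.ofReal (signedIteratedDeriv j ψ t) =
      ∫⁻ u in Ioi t, ENNReal.ofReal (signedIteratedDeriv (j + 1) ψ u) := by
  have hsub : Ici t ⊆ Ioi 0 := Ici_subset_Ioi.2 ht
  refine ofReal_eq_setLIntegral_Ioi_of_hasDerivWithinAt
    ((h.continuousOn_signedIteratedDeriv hj.le).mono hsub)
    (fun x hx => (h.hasDerivAt_signedIteratedDeriv hj (ht.trans hx)).hasDerivWithinAt)
    (measurable_signedIteratedDeriv_succ j ψ)
    (fun x hx => h.signedIteratedDeriv_nonneg hj (ht.trans hx)) (fun b hb => ?_)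
    (h.tendsto_signedIteratedDeriv hψ hj.le)
  refine ContinuousOn.intervalIntegrable ((h.continuousOn_signedIteratedDeriv hj).mono ?_)
  rw [uIcc_of_le hb]
  exact Icc_subset_Ici_self.trans hsub

lemma ofReal_signedIteratedDeriv_eq_setLIntegral_negRightDeriv (h : DMonotoneOn (m + 2) ψ)
    (hψ : Tendsto ψ atTop (𝓝 0)) (ht : 0 < t) :
    ENNReal.ofReal (signedIteratedDeriv m ψ t) =
      ∫⁻ u in Ioi t, ENNReal.ofReal (negRightDeriv (signedIteratedDeriv m ψ) u) :=
  h.convexOn_signedIteratedDeriv.ofReal_eq_setLIntegral_negRightDeriv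
    (h.antitoneOn_signedIteratedDeriv le_rfl) (h.tendsto_signedIteratedDeriv hψ le_rfl) ht

lemma bddAbove_superlevel (h : DMonotoneOn (m + 2) ψ) (hψ : Tendsto ψ atTop (𝓝 0)) {a : ℝ}
    (ha : 0 < a) :
    BddAbove {s | 0 < s ∧ a < negRightDeriv (signedIteratedDeriv m ψ) s} := by
  have hfin := h.ofReal_signedIteratedDeriv_eq_setLIntegral_negRightDeriv hψ one_pos
  exact bddAbove_superlevel_of_setLIntegral_ne_top
    h.convexOn_signedIteratedDeriv.antitoneOn_negRightDeriv zero_le_one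
    (hfin ▸ ENNReal.ofReal_ne_top) ha

lemma measurable_williamsonRadius (h : DMonotoneOn (m + 2) ψ) (hψ : Tendsto ψ atTop (𝓝 0)) :
    Measurable (williamsonRadius m ψ) :=
  measurable_superlevelEnd fun _ ha => h.bddAbove_superlevel hψ ha

theorem ofReal_signedIteratedDeriv_eq_setLIntegral_truncPow (h : DMonotoneOn (m + 2) ψ)
    (hψ : Tendsto ψ atTop (𝓝 0)) {i : ℕ} (hi : i ≤ m) (ht : 0 < t) :
    ENNReal.ofReal (signedIteratedDeriv (m - i) ψ t) =
      ∫⁻ a in Ioi 0, truncPow (i + 1) (williamsonRadius m ψ a) t := by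
  induction i generalizing t with
  | zero =>
    have hf := h.convexOn_signedIteratedDeriv
    rw [Nat.sub_zero, h.ofReal_signedIteratedDeriv_eq_setLIntegral_negRightDeriv hψ ht]
    exact setLIntegral_Ioi_ofReal_eq_setLIntegral_truncPow hf.antitoneOn_negRightDeriv
      (measurable_negRightDeriv _)
      (fun u hu => hf.negRightDeriv_nonneg (h.antitoneOn_signedIteratedDeriv le_rfl) hu)
      (fun _ ha => h.bddAbove_superlevel hψ ha) ht.le
  | succ i ih =>
    have hR := h.measurable_williamsonRadius hψ
    rw [h.ofReal_signedIteratedDeriv_eq_setLIntegral hψ (by omega) ht,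
      show m - (i + 1) + 1 = m - i by omega]
    calc ∫⁻ u in Ioi t, ENNReal.ofReal (signedIteratedDeriv (m - i) ψ u)
        = ∫⁻ u in Ioi t, ∫⁻ a in Ioi 0, truncPow (i + 1) (williamsonRadius m ψ a) u :=
          setLIntegral_congr_fun measurableSet_Ioi fun u hu => ih (by omega) (ht.trans hu)
      _ = ∫⁻ a in Ioi 0, ∫⁻ u in Ioi t, truncPow (i + 1) (williamsonRadius m ψ a) u :=
          lintegral_lintegral_swap ((measurable_truncPow _).comp
            ((hR.comp measurable_snd).prodMk measurable_fst)).aemeasurable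
      _ = ∫⁻ a in Ioi 0, truncPow (i + 2) (williamsonRadius m ψ a) t := by
          simp_rw [setLIntegral_Ioi_truncPow]

lemma ofReal_abs_deriv_le_setLIntegral_truncPow (h : DMonotoneOn (m + 2) ψ)
    (hψ : Tendsto ψ atTop (𝓝 0)) (ht : 0 < t) :
    ENNReal.ofReal |deriv ψ t| ≤ ∫⁻ a in Ioi 0, truncPow m (williamsonRadius m ψ a) t := by
  cases m with
  | zero =>
    simp only [williamsonRadius, signedIteratedDeriv_zero]
    by_cases hd : DifferentiableAt ℝ ψ t
    · have hf : ConvexOn ℝ (Ioi 0) ψ := by simpa using h.convexOn_signedIteratedDeriv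
      have hr : deriv ψ t = -negRightDeriv ψ t := by
        rw [negRightDeriv, neg_neg,
          hd.hasDerivAt.hasDerivWithinAt.derivWithin (uniqueDiffWithinAt_Ioi t)]
      rw [hr, abs_neg, abs_of_nonneg (hf.negRightDeriv_nonneg
        (by simpa using h.antitoneOn_signedIteratedDeriv le_rfl) ht)]
      exact ofReal_le_setLIntegral_truncPow_zero
        (fun _ ha => by simpa using h.bddAbove_superlevel hψ ha) ht
    · simp [deriv_zero_of_not_differentiableAt hd]
  | succ m =>
    have hd := h.hasDerivAt_signedIteratedDeriv (Nat.succ_pos m) ht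
    rw [signedIteratedDeriv_zero] at hd
    rw [hd.deriv, abs_neg, abs_of_nonneg (h.signedIteratedDeriv_nonneg (by omega) ht),
      ← h.ofReal_signedIteratedDeriv_eq_setLIntegral_truncPow hψ (Nat.le_succ m) ht,
      Nat.add_sub_cancel_left]

lemma setLIntegral_truncPow_zero_le_one (h : DMonotoneOn (m + 2) ψ)
    (hψ : Tendsto ψ atTop (𝓝 0)) (hψ1 : ∀ x > 0, ψ x ≤ 1) :
    ∫⁻ a in Ioi 0, truncPow (m + 1) (williamsonRadius m ψ a) 0 ≤ 1 := by
  refine lintegral_truncPow_zero_le (h.measurable_williamsonRadius hψ) m.succ_ne_zero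
    fun t ht => ?_
  rw [← h.ofReal_signedIteratedDeriv_eq_setLIntegral_truncPow hψ le_rfl ht, Nat.sub_self,
    signedIteratedDeriv_zero, ← ENNReal.ofReal_one]
  exact ENNReal.ofReal_le_ofReal (hψ1 t ht)

end DMonotoneOn

theorem integral_mul_deriv_sq_le {m : ℕ} {ψ : ℝ → ℝ} (h : DMonotoneOn (m + 2) ψ)
    (hψ : Tendsto ψ atTop (𝓝 0)) (hψ1 : ∀ x > 0, ψ x ≤ 1) :
    ∫ t in Ioi 0, t * deriv ψ t ^ 2 ≤ (m + 1) / (2 * (2 * m + 1)) := by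
  set R := williamsonRadius m ψ
  have hR : Measurable R := h.measurable_williamsonRadius hψ
  have hk : Measurable (Function.uncurry fun a t => truncPow m (R a) t) :=
    (measurable_truncPow m).comp ((hR.comp measurable_fst).prodMk measurable_snd)
  have hbound : ∫⁻ t in Ioi 0, ENNReal.ofReal (t * deriv ψ t ^ 2) ≤
      ENNReal.ofReal ((m + 1) / (2 * (2 * m + 1))) :=
    calc ∫⁻ t in Ioi 0, ENNReal.ofReal (t * deriv ψ t ^ 2)
        ≤ ∫⁻ t in Ioi 0, ENNReal.ofReal t * (∫⁻ a in Ioi 0, truncPow m (R a) t) ^ 2 := by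
          refine setLIntegral_mono' measurableSet_Ioi fun t (ht : 0 < t) => ?_
          rw [← sq_abs, ENNReal.ofReal_mul ht.le, ENNReal.ofReal_pow (abs_nonneg _)]
          gcongr
          exact h.ofReal_abs_deriv_le_setLIntegral_truncPow hψ ht
      _ = ∫⁻ t, (∫⁻ a in Ioi 0, truncPow m (R a) t) ^ 2
            ∂(volume.restrict (Ioi 0)).withDensity ENNReal.ofReal :=
          (lintegral_withDensity_eq_lintegral_mul _ ENNReal.measurable_ofReal
            (hk.lintegral_prod_left.pow_const 2)).symm
      _ ≤ ENNReal.ofReal ((m + 1) / (2 * (2 * m + 1))) *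
            (∫⁻ a in Ioi 0, truncPow (m + 1) (R a) 0) ^ 2 := by
          refine lintegral_sq_lintegral_le hk
            ((measurable_truncPow _).comp (hR.prodMk measurable_const)) fun a => ?_
          rw [lintegral_withDensity_eq_lintegral_mul _ ENNReal.measurable_ofReal
            (hk.of_uncurry_left.pow_const 2)]
          exact (setLIntegral_Ioi_mul_truncPow_sq m (superlevelEnd_nonneg _ a)).le
      _ ≤ ENNReal.ofReal ((m + 1) / (2 * (2 * m + 1))) :=
          mul_le_of_le_one_right' (pow_le_one' (h.setLIntegral_truncPow_zero_le_one hψ hψ1) 2)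
  rw [integral_eq_lintegral_of_nonneg_ae (f := fun t => t * deriv ψ t ^ 2)
    ((ae_restrict_iff' measurableSet_Ioi).2
      (ae_of_all _ fun t (ht : 0 < t) => mul_nonneg ht.le (sq_nonneg _)))
    (measurable_id.mul ((measurable_deriv ψ).pow_const 2)).aestronglyMeasurable]
  exact ENNReal.toReal_le_of_le_ofReal (by positivity) hbound

lemma ofReal_abs_deriv_max_one_sub_pow (m : ℕ) {t : ℝ} (ht : t ≠ 1) :
    ENNReal.ofReal |deriv (fun x : ℝ => max (1 - x) 0 ^ (m + 1)) t| =
      ENNReal.ofReal ((m + 1)! : ℝ) * truncPow m 1 t := by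
  rcases ht.lt_or_gt with ht | ht
  · have hloc : (fun x : ℝ => max (1 - x) 0 ^ (m + 1)) =ᶠ[𝓝 t] fun x => (1 - x) ^ (m + 1) := by
      filter_upwards [Iio_mem_nhds ht] with x (hx : x < 1)
      rw [max_eq_left (by linarith)]
    have hd := (((hasDerivAt_id t).const_sub 1).pow (m + 1)).congr_of_eventuallyEq hloc
    rw [hd.deriv, truncPow, if_pos ht.le, ← ENNReal.ofReal_mul (by positivity)]
    congr 1
    simp only [id, Nat.add_sub_cancel, Nat.factorial_succ, mul_neg_one, abs_neg]
    rw [abs_of_nonneg (mul_nonneg (by positivity) (pow_nonneg (sub_nonneg.2 ht.le) m))]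
    push_cast
    field_simp
  · have hloc : (fun x : ℝ => max (1 - x) 0 ^ (m + 1)) =ᶠ[𝓝 t] fun _ => 0 := by
      filter_upwards [Ioi_mem_nhds ht] with x (hx : 1 < x)
      rw [max_eq_right (by linarith), zero_pow m.succ_ne_zero]
    rw [hloc.deriv_eq, truncPow, if_neg ht.not_ge]
    simp

theorem integral_mul_deriv_sq_max_one_sub_pow (m : ℕ) :
    ∫ t in Ioi 0, t * deriv (fun x : ℝ => max (1 - x) 0 ^ (m + 1)) t ^ 2 =
      (m + 1) / (2 * (2 * m + 1)) := by
  set ψ := fun x : ℝ => max (1 - x) 0 ^ (m + 1)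
  have hae : ∀ᵐ t ∂volume.restrict (Ioi 0), ENNReal.ofReal (t * deriv ψ t ^ 2) =
      ENNReal.ofReal ((m + 1)! : ℝ) ^ 2 * (ENNReal.ofReal t * truncPow m 1 t ^ 2) := by
    filter_upwards [ae_restrict_mem measurableSet_Ioi,
      ae_restrict_of_ae (Measure.ae_ne volume 1)] with t (ht : 0 < t) ht1
    rw [← sq_abs, ENNReal.ofReal_mul ht.le, ENNReal.ofReal_pow (abs_nonneg _),
      ofReal_abs_deriv_max_one_sub_pow m ht1]
    ring
  have hlint : ∫⁻ t in Ioi 0, ENNReal.ofReal (t * deriv ψ t ^ 2) =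
      ENNReal.ofReal ((m + 1) / (2 * (2 * m + 1))) := by
    rw [lintegral_congr_ae hae, lintegral_const_mul' _ _ (by simp),
      setLIntegral_Ioi_mul_truncPow_sq m zero_le_one, truncPow, if_pos zero_le_one,
      ← ENNReal.ofReal_pow (by positivity), ← ENNReal.ofReal_pow (by positivity),
      ← ENNReal.ofReal_mul (by positivity), ← ENNReal.ofReal_mul (by positivity)]
    congr 1
    simp only [sub_zero, one_pow]
    field_simp
  rw [integral_eq_lintegral_of_nonneg_ae (f := fun t => t * deriv ψ t ^ 2)
    ((ae_restrict_iff' measurableSet_Ioi).2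
      (ae_of_all _ fun t (ht : 0 < t) => mul_nonneg ht.le (sq_nonneg _)))
    (measurable_id.mul ((measurable_deriv ψ).pow_const 2)).aestronglyMeasurable, hlint,
    ENNReal.toReal_ofReal (by positivity)]

/-- Kendall's tau of the bivariate margin of a `d`-dimensional Archimedean copula,
given by `τ = 1 - 4 ∫₀^∞ t (ψ'(t))² dt`, is at least `-1/(2d-3)`, with equality for the
lower-bound generator `ψ_d^L(x) = (1-x)₊^(d-1)`. -/
theorem stmt17 (d : ℕ) (hd : 2 ≤ d) (ψ : ℝ → ℝ) (hψ : IsArchGen ψ)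
    (hmon : DMonotoneOn d ψ) :
    (-1 / (2*(d:ℝ) - 3) ≤ 1 - 4 * ∫ t in Set.Ioi (0:ℝ), t * (deriv ψ t) ^ 2) ∧
    1 - 4 * (∫ t in Set.Ioi (0:ℝ),
        t * (deriv (fun x : ℝ => max (1 - x) 0 ^ (d - 1)) t) ^ 2)
      = -1 / (2*(d:ℝ) - 3) := by
  obtain ⟨m, rfl⟩ : ∃ m, d = m + 2 := ⟨d - 2, by omega⟩
  obtain ⟨-, -, -, hψ0, hψ1, -⟩ := hψ
  have htau : 1 - 4 * ((m + 1) / (2 * (2 * m + 1)) : ℝ) = -1 / (2 * ((m + 2 : ℕ) : ℝ) - 3) := by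
    rw [show 2 * ((m + 2 : ℕ) : ℝ) - 3 = 2 * m + 1 by push_cast; ring]
    field_simp
    ring
  constructor
  · linarith [integral_mul_deriv_sq_le hmon hψ0 fun x hx => (hψ1 x hx.le).2]
  · rw [show m + 2 - 1 = m + 1 by omega, integral_mul_deriv_sq_max_one_sub_pow, htau]
end
end

section
/- Let ψ be a d-monotone Archimedean generator with d ≥ 3, and let f(x) = 1 - ψ(x)^{1/(d-1)}. Then f is concave on (0, ψ⁻¹(0)). Consequently, the d-dimensional Archimedean copula C generated by ψ dominates the copula C_d^L generated by ψ_d^L(x) = (1-x)₊^{d-1} pointwise: C_d^L(u) ≤ C(u) for all u ∈ [0,1]^d. -/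
/-!
Write `Q k = (-1)^k ψ^(k)`. If `Φ' = -φ` with `Φ ≥ 0` and `φ^(1/m)` convex, then `Φ^(1/(m+1))` is
convex: the convexity of `φ^(1/m)` gives `m φ² ≤ (m+1) (-φ') Φ` (a tangent-line estimate), and this
is exactly the sign condition for `(Φ^(1/(m+1)))'' ≥ 0`. Descending from the convex `Q (d-2)` to
`Q 0 = ψ` gives the convexity of `ψ^(1/(d-1))`; the derivatives this needs are supplied by
smoothing and removed by a limit.

Since `ψ^(1/(d-1))` is convex on `[0, ∞)` with value `1` at `0`, the function `1 - ψ^(1/(d-1))`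
is subadditive there; applied to `x i = ψ⁻¹(u i)` and raised to the power `d - 1`, this is
`C_d^L(u) ≤ C(u)`.
-/

open Set MeasureTheory ProbabilityTheory Filter

noncomputable section

open Topology

section Ladder

variable {Φ φ χ : ℝ → ℝ}

theorem tendsto_atTop_zero_of_hasDerivAt_neg_s19 (hΦ : ∀ x > 0, HasDerivAt Φ (-φ x) x)
    (hΦ0 : ∀ x > 0, 0 ≤ Φ x) (hφ : AntitoneOn φ (Ioi 0)) (hφ0 : ∀ x > 0, 0 ≤ φ x) :
    Tendsto φ atTop (𝓝 0) := by
  have hbound : ∀ t > 1, φ t ≤ Φ 1 / (t - 1) := by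
    intro t ht
    obtain ⟨ξ, hξ, hslope⟩ := exists_hasDerivAt_eq_slope Φ (fun x => -φ x) ht
      (fun y hy => (hΦ y (by linarith [hy.1])).continuousAt.continuousWithinAt)
      (fun y hy => hΦ y (by linarith [hy.1]))
    have hφξ : φ t ≤ φ ξ :=
      hφ (show 0 < ξ by linarith [hξ.1]) (show 0 < t by linarith) hξ.2.le
    rw [eq_div_iff (by linarith)] at hslope
    rw [le_div_iff₀ (by linarith)]
    nlinarith [hΦ0 t (by linarith)]
  refine tendsto_of_tendsto_of_tendsto_of_le_of_le' tendsto_const_nhds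
    ((tendsto_const_nhds (x := Φ 1)).div_atTop (tendsto_atTop_add_const_right _ (-1) tendsto_id))
    ?_ ?_
  · filter_upwards [eventually_gt_atTop 0] with t ht using hφ0 t ht
  · filter_upwards [eventually_gt_atTop 1] with t ht
    simpa [sub_eq_add_neg] using hbound t ht

/-- The tangent-line estimate in differential form: with `G = φ ^ (1/m - 1) * χ`, the function
`t ↦ (1/m + 1) G(x) (Φ x - Φ t) + φ t ^ (1/m + 1)` is nondecreasing on `[x, ∞)`, and
`φ t → 0` as `t → ∞`. -/
theorem sq_le_mul_of_antitoneOn {m : ℝ} (hm : 0 < m)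
    (hΦ : ∀ x > 0, HasDerivAt Φ (-φ x) x) (hφ : ∀ x > 0, HasDerivAt φ (-χ x) x)
    (hΦ0 : ∀ x > 0, 0 ≤ Φ x) (hφ0 : ∀ x > 0, 0 < φ x) (hχ0 : ∀ x > 0, 0 ≤ χ x)
    (hG : AntitoneOn (fun x => φ x ^ (1 / m - 1) * χ x) (Ioi 0)) {x : ℝ} (hx : 0 < x) :
    m * φ x ^ 2 ≤ (m + 1) * (χ x * Φ x) := by
  set r := 1 / m + 1
  have hr : 0 < r := by positivity
  set G := fun y => φ y ^ (1 / m - 1) * χ y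
  have hGx : 0 ≤ G x := mul_nonneg (Real.rpow_nonneg (hφ0 x hx).le _) (hχ0 x hx)
  set V := fun t => r * G x * (Φ x - Φ t) + φ t ^ r
  have hV : ∀ t > 0, HasDerivAt V (r * φ t * (G x - G t)) t := by
    intro t ht
    have h := ((hΦ t ht).const_sub (Φ x)).const_mul (r * G x) |>.add
      ((hφ t ht).rpow_const (p := r) (Or.inl (hφ0 t ht).ne'))
    have hsplit : φ t ^ (r - 1) = φ t * φ t ^ (1 / m - 1) := by
      rw [show r - 1 = 1 + (1 / m - 1) by ring, Real.rpow_add (hφ0 t ht), Real.rpow_one]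
    exact h.congr_deriv (by rw [hsplit]; ring)
  have hVmono : MonotoneOn V (Ici x) := by
    refine monotoneOn_of_hasDerivWithinAt_nonneg (f' := fun t => r * φ t * (G x - G t))
      (convex_Ici x)
      (fun t ht => (hV t (hx.trans_le ht)).continuousAt.continuousWithinAt) ?_ ?_
    · intro t ht
      rw [interior_Ici] at ht
      exact (hV t (hx.trans ht)).hasDerivWithinAt
    · intro t ht
      rw [interior_Ici] at ht
      have hGt : G t ≤ G x := hG hx (hx.trans ht) ht.le
      exact mul_nonneg (mul_nonneg hr.le (hφ0 t (hx.trans ht)).le) (sub_nonneg.2 hGt)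
  have hle : ∀ t ≥ x, φ x ^ r ≤ r * G x * Φ x + φ t ^ r := by
    intro t ht
    have h := hVmono self_mem_Ici ht ht
    simp only [V, sub_self, mul_zero, zero_add] at h
    have : 0 ≤ r * G x * Φ t := mul_nonneg (mul_nonneg hr.le hGx) (hΦ0 t (hx.trans_le ht))
    linarith
  have hφlim : Tendsto (fun t => φ t ^ r) atTop (𝓝 0) := by
    have hanti : AntitoneOn φ (Ioi 0) :=
      antitoneOn_of_hasDerivWithinAt_nonpos (convex_Ioi 0)
        (fun t ht => (hφ t ht).continuousAt.continuousWithinAt)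
        (fun t ht => (hφ t (interior_subset ht)).hasDerivWithinAt)
        (fun t ht => neg_nonpos.2 (hχ0 t (interior_subset ht)))
    simpa [Real.zero_rpow hr.ne'] using
      (tendsto_atTop_zero_of_hasDerivAt_neg_s19 hΦ hΦ0 hanti fun t ht => (hφ0 t ht).le).rpow_const
        (p := r) (Or.inr hr.le)
  have hrx : φ x ^ r ≤ r * G x * Φ x := by
    have h := (tendsto_const_nhds (x := r * G x * Φ x)).add hφlim
    rw [add_zero] at h
    exact ge_of_tendsto h ((eventually_ge_atTop x).mono hle)
  have hpow : φ x ^ r = φ x ^ (1 / m - 1) * φ x ^ 2 := by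
    rw [show r = (1 / m - 1) + (2 : ℕ) by push_cast; ring, Real.rpow_add (hφ0 x hx),
      Real.rpow_natCast]
  have hsq : φ x ^ 2 ≤ r * (χ x * Φ x) := by
    refine le_of_mul_le_mul_left ?_ (Real.rpow_pos_of_pos (hφ0 x hx) (1 / m - 1))
    rw [← hpow]
    calc φ x ^ (1 / m - 1) * (r * (χ x * Φ x)) = r * G x * Φ x := by ring
      _ ≥ φ x ^ r := hrx
  calc m * φ x ^ 2 ≤ m * (r * (χ x * Φ x)) := mul_le_mul_of_nonneg_left hsq hm.le
    _ = (m + 1) * (χ x * Φ x) := by simp only [r]; field_simp; ring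

theorem antitoneOn_rpow_mul_of_sq_le {m : ℝ} (hm : 0 < m)
    (hΦ : ∀ x > 0, HasDerivAt Φ (-φ x) x) (hφ : ∀ x > 0, HasDerivAt φ (-χ x) x)
    (hΦ0 : ∀ x > 0, 0 < Φ x) (hsq : ∀ x > 0, m * φ x ^ 2 ≤ (m + 1) * (χ x * Φ x)) :
    AntitoneOn (fun x => Φ x ^ (1 / (m + 1) - 1) * φ x) (Ioi 0) := by
  set c := 1 / (m + 1)
  have hderiv : ∀ x > 0, HasDerivAt (fun x => Φ x ^ (c - 1) * φ x)
      (Φ x ^ (c - 1 - 1) * c * (m * φ x ^ 2 - (m + 1) * (χ x * Φ x))) x := by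
    intro x hx
    have h := ((hΦ x hx).rpow_const (p := c - 1) (Or.inl (hΦ0 x hx).ne')).mul (hφ x hx)
    refine h.congr_deriv ?_
    have hsplit : Φ x ^ (c - 1) = Φ x ^ (c - 1 - 1) * Φ x := by
      rw [← Real.rpow_add_one (hΦ0 x hx).ne', sub_add_cancel]
    rw [hsplit]
    simp only [c]
    field_simp
    ring
  refine antitoneOn_of_hasDerivWithinAt_nonpos (convex_Ioi 0)
    (fun x hx => (hderiv x hx).continuousAt.continuousWithinAt)
    (fun x hx => (hderiv x (interior_subset hx)).hasDerivWithinAt) fun x hx => ?_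
  rw [interior_Ioi] at hx
  exact mul_nonpos_of_nonneg_of_nonpos
    (mul_nonneg (Real.rpow_nonneg (hΦ0 x hx).le _) (by positivity)) (sub_nonpos.2 (hsq x hx))

theorem convexOn_rpow_of_antitoneOn {c : ℝ} (hc : 0 ≤ c)
    (hΦ : ∀ x > 0, HasDerivAt Φ (-φ x) x) (hΦ0 : ∀ x > 0, 0 < Φ x)
    (hG : AntitoneOn (fun x => Φ x ^ (c - 1) * φ x) (Ioi 0)) :
    ConvexOn ℝ (Ioi 0) (fun x => Φ x ^ c) := by
  have hderiv : ∀ x > 0, HasDerivAt (fun x => Φ x ^ c) (-c * (Φ x ^ (c - 1) * φ x)) x :=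
    fun x hx => ((hΦ x hx).rpow_const (Or.inl (hΦ0 x hx).ne')).congr_deriv (by ring)
  refine MonotoneOn.convexOn_of_deriv (convex_Ioi 0)
    (fun x hx => (hderiv x hx).continuousAt.continuousWithinAt)
    (fun x hx => (hderiv x (interior_subset hx)).differentiableAt.differentiableWithinAt) ?_
  rw [interior_Ioi]
  intro x hx y hy hxy
  rw [(hderiv x hx).deriv, (hderiv y hy).deriv, neg_mul, neg_mul, neg_le_neg_iff]
  exact mul_le_mul_of_nonneg_left (hG hx hy hxy) hc

end Ladder

/-- Going down the ladder, the invariant is that `P k ^ (1/(n-k+1) - 1) * P (k+1)`, a negative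
multiple of the derivative of `P k ^ (1/(n-k+1))`, is antitone. -/
theorem convexOn_rpow_of_ladder {P : ℕ → ℝ → ℝ} {n : ℕ}
    (hder : ∀ k ≤ n, ∀ x > 0, HasDerivAt (P k) (-P (k + 1) x) x)
    (hpos : ∀ k ≤ n + 1, ∀ x > 0, 0 < P k x) (htop : AntitoneOn (P (n + 1)) (Ioi 0)) :
    ConvexOn ℝ (Ioi 0) (fun x => P 0 x ^ (1 / ((n : ℝ) + 1))) := by
  have key : ∀ k ≤ n,
      AntitoneOn (fun x => P k x ^ (1 / ((n : ℝ) - k + 1) - 1) * P (k + 1) x) (Ioi 0) := by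
    intro k hk
    induction hk using Nat.decreasingInduction with
    | self => simpa using htop
    | of_succ k hk ih =>
      have hm : (0 : ℝ) < n - (k + 1 : ℕ) + 1 := by
        have : ((k + 1 : ℕ) : ℝ) ≤ n := by exact_mod_cast hk
        linarith
      have hexp : (n : ℝ) - k + 1 = (n - (k + 1 : ℕ) + 1) + 1 := by push_cast; ring
      rw [hexp]
      exact antitoneOn_rpow_mul_of_sq_le hm (hder k hk.le) (hder (k + 1) hk)
        (hpos k (by omega)) fun x hx => sq_le_mul_of_antitoneOn hm (hder k hk.le)
          (hder (k + 1) hk) (fun y hy => (hpos k (by omega) y hy).le) (hpos (k + 1) (by omega))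
          (fun y hy => (hpos (k + 2) (by omega) y hy).le) ih hx
  have h0 := key 0 n.zero_le
  simp only [Nat.cast_zero, sub_zero] at h0
  exact convexOn_rpow_of_antitoneOn (by positivity) (hder 0 n.zero_le) (hpos 0 (by omega)) h0

section Smoothing

variable {ε : ℝ} {g h : ℝ → ℝ} {x : ℝ}

def steklov (ε : ℝ) (g : ℝ → ℝ) (x : ℝ) : ℝ := (∫ t in x..x + ε, g t) / ε

def diffQuot (ε : ℝ) (g : ℝ → ℝ) (x : ℝ) : ℝ := (g x - g (x + ε)) / ε

theorem hasDerivAt_steklov (hε : 0 < ε) (hg : ContinuousOn g (Ioi 0)) (hx : 0 < x) :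
    HasDerivAt (steklov ε g) (-diffQuot ε g x) x := by
  have hint : ∀ a b, 0 < a → 0 < b → IntervalIntegrable g volume a b := fun a b ha hb =>
    (hg.mono fun t ht => (lt_min ha hb).trans_le ht.1).intervalIntegrable
  have hprim : ∀ y > 0, HasDerivAt (fun u => ∫ t in x / 2..u, g t) (g y) y := fun y hy =>
    intervalIntegral.integral_hasDerivAt_right (hint _ _ (by linarith) hy)
      (hg.stronglyMeasurableAtFilter isOpen_Ioi y hy) (hg.continuousAt (Ioi_mem_nhds hy))
  have hshift := (hprim (x + ε) (by linarith)).comp_add_const x ε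
  have h := (hshift.sub (hprim x hx)).div_const ε
  refine (h.congr_deriv (by simp only [diffQuot]; ring)).congr_of_eventuallyEq ?_
  filter_upwards [eventually_gt_nhds (by linarith : x / 2 < x)] with y hy
  show _ = ((∫ t in x / 2..y + ε, g t) - ∫ t in x / 2..y, g t) / ε
  rw [steklov, ← intervalIntegral.integral_add_adjacent_intervals
    (hint (x / 2) y (by linarith) (by linarith)) (hint y (y + ε) (by linarith) (by linarith))]
  ring

theorem steklov_mem_Icc (hε : 0 < ε) (hg : AntitoneOn g (Ioi 0)) (hx : 0 < x) :
    steklov ε g x ∈ Icc (g (x + ε)) (g x) := by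
  have hsub : Icc x (x + ε) ⊆ Ioi 0 := fun t ht => hx.trans_le ht.1
  have hint : IntervalIntegrable g volume x (x + ε) :=
    (hg.mono (by rwa [uIcc_of_le (by linarith)])).intervalIntegrable
  rw [steklov, mem_Icc, le_div_iff₀ hε, div_le_iff₀ hε]
  constructor
  · calc g (x + ε) * ε = ∫ _ in x..x + ε, g (x + ε) := by simp; ring
      _ ≤ ∫ t in x..x + ε, g t :=
        intervalIntegral.integral_mono_on (by linarith) intervalIntegrable_const hint
          fun t ht => hg (hsub ht) (hsub ⟨by linarith, le_rfl⟩) ht.2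
  · calc ∫ t in x..x + ε, g t ≤ ∫ _ in x..x + ε, g x :=
        intervalIntegral.integral_mono_on (by linarith) hint intervalIntegrable_const
          fun t ht => hg (hsub ⟨le_rfl, by linarith⟩) (hsub ht) ht.1
      _ = g x * ε := by simp; ring

theorem hasDerivAt_diffQuot (hgx : HasDerivAt g (-h x) x)
    (hgxε : HasDerivAt g (-h (x + ε)) (x + ε)) :
    HasDerivAt (diffQuot ε g) (-diffQuot ε h x) x :=
  ((hgx.sub (hgxε.comp_add_const x ε)).div_const ε).congr_deriv (by simp only [diffQuot]; ring)

theorem diffQuot_pos (hε : 0 < ε) (hg : StrictAntiOn g (Ioi 0)) (hx : 0 < x) :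
    0 < diffQuot ε g x :=
  div_pos (sub_pos.2 (hg hx (by simp only [mem_Ioi]; linarith) (by linarith))) hε

theorem ConvexOn.antitoneOn_diffQuot (hg : ConvexOn ℝ (Ioi 0) g) (hε : 0 < ε) :
    AntitoneOn (diffQuot ε g) (Ioi 0) := by
  intro x hx y hy hxy
  rcases hxy.eq_or_lt with rfl | hxy
  · exact le_rfl
  have hmem : ∀ t ∈ Ioi (0 : ℝ), t + ε ∈ Ioi (0 : ℝ) := fun t ht => by
    simp only [mem_Ioi] at ht ⊢; linarith
  have h1 := hg.secant_mono_aux2 hx (hmem y hy) (by linarith : x < x + ε) (by linarith)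
  have h2 := hg.secant_mono_aux3 hx (hmem y hy) hxy (by linarith : y < y + ε)
  simp only [diffQuot, add_sub_cancel_left] at h1 h2 ⊢
  rw [div_le_div_iff_of_pos_right hε]
  have := h1.trans h2
  rw [div_le_div_iff_of_pos_right hε] at this
  linarith

def smoothLadder (ε : ℝ) (Q : ℕ → ℝ → ℝ) : ℕ → ℝ → ℝ
  | 0 => steklov ε (Q 0)
  | k + 1 => diffQuot ε (Q k)

theorem convexOn_rpow_steklov {Q : ℕ → ℝ → ℝ} {n : ℕ} (hε : 0 < ε)
    (hder : ∀ k < n, ∀ x > 0, HasDerivAt (Q k) (-Q (k + 1) x) x)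
    (hanti : ∀ k ≤ n, StrictAntiOn (Q k) (Ioi 0)) (hpos : ∀ x > 0, 0 < Q 0 x)
    (hconv : ConvexOn ℝ (Ioi 0) (Q n)) :
    ConvexOn ℝ (Ioi 0) (fun x => steklov ε (Q 0) x ^ (1 / ((n : ℝ) + 1))) := by
  have hcont : ContinuousOn (Q 0) (Ioi 0) := by
    rcases n.eq_zero_or_pos with rfl | hn
    · exact hconv.continuousOn isOpen_Ioi
    · exact fun x hx => (hder 0 hn x hx).continuousAt.continuousWithinAt
  refine convexOn_rpow_of_ladder (P := smoothLadder ε Q) (fun k hk x hx => ?_)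
    (fun k hk x hx => ?_) (hconv.antitoneOn_diffQuot hε)
  · cases k with
    | zero => exact hasDerivAt_steklov hε hcont hx
    | succ k =>
      exact hasDerivAt_diffQuot (hder k hk x hx) (hder k hk (x + ε) (by linarith))
  · cases k with
    | zero =>
      exact (hpos (x + ε) (by linarith)).trans_le
        (steklov_mem_Icc hε (hanti 0 n.zero_le).antitoneOn hx).1
    | succ k => exact diffQuot_pos hε (hanti k (by omega)) hx

end Smoothing

theorem ConvexOn.of_tendsto {ι E : Type*} [AddCommMonoid E] [Module ℝ E] {l : Filter ι}
    [l.NeBot] {s : Set E} {F : ι → E → ℝ} {f : E → ℝ} (hs : Convex ℝ s)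
    (hF : ∀ᶠ i in l, ConvexOn ℝ s (F i)) (hf : ∀ x ∈ s, Tendsto (fun i => F i x) l (𝓝 (f x))) :
    ConvexOn ℝ s f :=
  ⟨hs, fun x hx y hy a b ha hb hab =>
    le_of_tendsto_of_tendsto (hf _ (hs hx hy ha hb hab))
      (((hf x hx).const_mul a).add ((hf y hy).const_mul b))
      (hF.mono fun _ hi => hi.2 hx hy ha hb hab)⟩

namespace DMonotoneOn

variable {d : ℕ} {f : ℝ → ℝ}

theorem hasDerivAt (h : DMonotoneOn d f) {k : ℕ} (hk : k + 2 < d) {x : ℝ} (hx : 0 < x) :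
    HasDerivAt (fun y => (-1 : ℝ) ^ k * iteratedDeriv k f y)
      (-((-1 : ℝ) ^ (k + 1) * iteratedDeriv (k + 1) f x)) x := by
  have h' := ((h.2.1 k hk x hx).hasDerivAt.const_mul ((-1 : ℝ) ^ k))
  rw [← iteratedDeriv_succ] at h'
  exact h'.congr_deriv (by ring)

theorem antitoneOn (h : DMonotoneOn d f) {k : ℕ} (hk : k + 2 ≤ d) :
    AntitoneOn (fun y => (-1 : ℝ) ^ k * iteratedDeriv k f y) (Ioi 0) := by
  rcases hk.lt_or_eq with hk | hk
  · exact antitoneOn_of_hasDerivWithinAt_nonpos (convex_Ioi 0)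
      (fun x hx => (h.hasDerivAt hk hx).continuousAt.continuousWithinAt)
      (fun x hx => (h.hasDerivAt hk (interior_subset hx)).hasDerivWithinAt)
      fun x hx => neg_nonpos.2 (h.2.2.1 (k + 1) hk _ (interior_subset hx))
  · obtain rfl : k = d - 2 := by omega
    exact h.2.2.2.1

/-- Adding `ε e^{-x}`, itself completely monotone, makes every level of the ladder strictly
positive and strictly decreasing; a Steklov average then smooths the top level. -/
theorem convexOn_rpow_steklov (hd : 2 ≤ d) (h : DMonotoneOn d f) {ε : ℝ} (hε : 0 < ε) :
    ConvexOn ℝ (Ioi 0)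
      (fun x => steklov ε (fun y => f y + ε * Real.exp (-y)) x ^ (1 / ((d : ℝ) - 1))) := by
  set Q : ℕ → ℝ → ℝ := fun k y => (-1 : ℝ) ^ k * iteratedDeriv k f y + ε * Real.exp (-y)
  have hexp : ∀ x, HasDerivAt (fun y => ε * Real.exp (-y)) (-(ε * Real.exp (-x))) x :=
    fun x => ((hasDerivAt_neg x).exp.const_mul ε).congr_deriv (by ring)
  have hexp_anti : StrictAntiOn (fun y => ε * Real.exp (-y)) (Ioi 0) := fun x _ y _ hxy =>
    mul_lt_mul_of_pos_left (Real.exp_lt_exp.2 (neg_lt_neg hxy)) hε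
  have hQ0 : Q 0 = fun y => f y + ε * Real.exp (-y) := by simp [Q]
  have hcast : ((d - 2 : ℕ) : ℝ) + 1 = (d : ℝ) - 1 := by
    rw [Nat.cast_sub hd]; push_cast; ring
  rw [← hcast, ← hQ0]
  refine _root_.convexOn_rpow_steklov hε
    (fun k hk x hx => ((h.hasDerivAt (k := k) (by omega) hx).add (hexp x)).congr_deriv (by ring))
    (fun k hk x hx y hy hxy => add_lt_add_of_le_of_lt
      (h.antitoneOn (k := k) (by omega) hx hy hxy.le) (hexp_anti hx hy hxy))
    (fun x hx => ?_) ?_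
  · exact add_pos_of_nonneg_of_pos (by simpa using h.2.2.1 0 (by omega) x hx) (by positivity)
  · have hexp_conv : ConvexOn ℝ univ fun y : ℝ => Real.exp (-y) :=
      convexOn_exp.comp_linearMap (-LinearMap.id : ℝ →ₗ[ℝ] ℝ)
    exact h.2.2.2.2.add ((hexp_conv.subset (subset_univ _) (convex_Ioi 0)).smul hε.le)

theorem convexOn_rpow (hd : 2 ≤ d) (h : DMonotoneOn d f) :
    ConvexOn ℝ (Ici 0) (fun x => f x ^ (1 / ((d : ℝ) - 1))) := by
  have hc : 0 ≤ 1 / ((d : ℝ) - 1) := by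
    have : (2 : ℝ) ≤ d := by exact_mod_cast hd
    exact one_div_nonneg.2 (by linarith)
  have hf_anti : AntitoneOn f (Ioi 0) := by simpa using h.antitoneOn (k := 0) (by omega)
  set S : ℝ → ℝ → ℝ := fun ε => steklov ε (fun y => f y + ε * Real.exp (-y))
  have hS : ∀ ε > 0, ∀ x ≥ 0, f (2 * ε + x) ≤ S ε (ε + x) ∧ S ε (ε + x) ≤ f (ε + x) + ε := by
    intro ε hε x hx
    have hanti : AntitoneOn (fun y => f y + ε * Real.exp (-y)) (Ioi 0) := fun y hy z hz hyz =>
      add_le_add (hf_anti hy hz hyz)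
        (mul_le_mul_of_nonneg_left (Real.exp_le_exp.2 (neg_le_neg hyz)) hε.le)
    obtain ⟨hlow, hup⟩ := steklov_mem_Icc hε hanti (by linarith : 0 < ε + x)
    rw [show ε + x + ε = 2 * ε + x by ring] at hlow
    have hexp : Real.exp (-(ε + x)) ≤ 1 := Real.exp_le_one_iff.2 (by linarith)
    constructor <;> nlinarith [Real.exp_pos (-(2 * ε + x))]
  have hlim : ∀ k ≥ (0 : ℝ), ∀ x ≥ (0 : ℝ),
      Tendsto (fun ε => f (k * ε + x)) (𝓝[>] 0) (𝓝 (f x)) := by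
    intro k hk x hx
    refine (h.1 x hx).tendsto.comp (tendsto_nhdsWithin_iff.2 ⟨?_, ?_⟩)
    · have : Tendsto (fun ε : ℝ => k * ε + x) (𝓝 0) (𝓝 (k * 0 + x)) :=
        ((continuous_const.mul continuous_id).add continuous_const).tendsto 0
      simpa using this.mono_left nhdsWithin_le_nhds
    · filter_upwards [self_mem_nhdsWithin] with ε hε
      exact add_nonneg (mul_nonneg hk (le_of_lt hε)) hx
  -- Evaluating at `ε + x` makes the approximants, convex on `(0, ∞)`, converge on `[0, ∞)`.
  refine ConvexOn.of_tendsto (l := 𝓝[>] 0) (F := fun ε x => S ε (ε + x) ^ (1 / ((d : ℝ) - 1)))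
    (convex_Ici 0) ?_ fun x hx => ?_
  · filter_upwards [self_mem_nhdsWithin] with ε hε
    exact ((h.convexOn_rpow_steklov hd hε).translate_right ε).subset
      (fun x hx => show 0 < ε + x by linarith [mem_Ici.1 hx, mem_Ioi.1 hε]) (convex_Ici 0)
  · refine Tendsto.rpow_const ?_ (Or.inr hc)
    refine tendsto_of_tendsto_of_tendsto_of_le_of_le' (hlim 2 zero_le_two x hx) ?_
      (by filter_upwards [self_mem_nhdsWithin] with ε hε using (hS ε hε x hx).1)
      (by filter_upwards [self_mem_nhdsWithin] with ε hε using (hS ε hε x hx).2)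
    simpa using (hlim 1 zero_le_one x hx).add (tendsto_nhdsWithin_of_tendsto_nhds tendsto_id)

end DMonotoneOn

theorem ConvexOn.add_le_map_zero_add {f : ℝ → ℝ} (hf : ConvexOn ℝ (Ici 0) f) {p q : ℝ}
    (hp : 0 ≤ p) (hq : 0 ≤ q) : f p + f q ≤ f 0 + f (p + q) := by
  rcases (add_nonneg hp hq).eq_or_lt with hpq | hpq
  · obtain ⟨rfl, rfl⟩ : p = 0 ∧ q = 0 := ⟨by linarith, by linarith⟩
    simp
  have hcomb : ∀ a, 0 ≤ a → a ≤ p + q →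
      f a ≤ (p + q - a) / (p + q) * f 0 + a / (p + q) * f (p + q) := by
    intro a ha hap
    have h := hf.2 (mem_Ici.2 le_rfl) (mem_Ici.2 hpq.le)
      (div_nonneg (sub_nonneg.2 hap) hpq.le) (div_nonneg ha hpq.le) (by field_simp; ring)
    simp only [smul_eq_mul, mul_zero, zero_add] at h
    rwa [div_mul_cancel₀ a hpq.ne'] at h
  calc f p + f q ≤ ((p + q - p) / (p + q) * f 0 + p / (p + q) * f (p + q)) +
        ((p + q - q) / (p + q) * f 0 + q / (p + q) * f (p + q)) :=
        add_le_add (hcomb p hp (by linarith)) (hcomb q hq (by linarith))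
    _ = f 0 + f (p + q) := by field_simp; ring

theorem ConvexOn.sum_sub_map_zero_le {ι : Type*} {f : ℝ → ℝ} (hf : ConvexOn ℝ (Ici 0) f)
    (s : Finset ι) {x : ι → ℝ} (hx : ∀ i ∈ s, 0 ≤ x i) :
    ∑ i ∈ s, (f (x i) - f 0) ≤ f (∑ i ∈ s, x i) - f 0 := by
  induction s using Finset.cons_induction with
  | empty => simp
  | cons i s hi ih =>
    rw [Finset.sum_cons, Finset.sum_cons]
    have hs := ih fun j hj => hx j (Finset.mem_cons_of_mem hj)
    have := hf.add_le_map_zero_add (hx i (Finset.mem_cons_self i s))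
      (Finset.sum_nonneg fun j hj => hx j (Finset.mem_cons_of_mem hj))
    linarith

theorem psiInv_nonneg (ψ : ℝ → ℝ) (u : ℝ) : 0 ≤ psiInv ψ u :=
  Real.sInf_nonneg fun _ hx => hx.1

theorem le_psi_psiInv {ψ : ℝ → ℝ} (hcont : ContinuousOn ψ (Ici 0)) (hψ0 : ψ 0 = 1) {u : ℝ}
    (hu : u ≤ 1) : u ≤ ψ (psiInv ψ u) := by
  by_contra! hlt
  have hs : 0 < psiInv ψ u := (psiInv_nonneg ψ u).lt_of_ne fun h => by
    rw [← h, hψ0] at hlt; linarith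
  have hev : ∀ᶠ t in 𝓝[<] psiInv ψ u, ψ t < u ∧ t ∈ Ioo 0 (psiInv ψ u) :=
    (((hcont.continuousAt (Ici_mem_nhds hs)).eventually (gt_mem_nhds hlt)).filter_mono
      nhdsWithin_le_nhds).and (Ioo_mem_nhdsLT hs)
  obtain ⟨t, hψt, ht0, hts⟩ := hev.exists
  exact (csInf_le ⟨0, fun _ hy => hy.1⟩ ⟨ht0.le, hψt.le⟩ : psiInv ψ u ≤ t).not_gt hts

theorem IsArchGen.lowerCopula_le {d : ℕ} (hd : 2 ≤ d) {ψ : ℝ → ℝ} (hψ : IsArchGen ψ)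
    (hconv : ConvexOn ℝ (Ici 0) (fun x => ψ x ^ (1 / ((d : ℝ) - 1))))
    (u : Fin d → ℝ) (hu : ∀ i, u i ∈ Icc (0 : ℝ) 1) :
    max ((∑ i, u i ^ (1 / ((d : ℝ) - 1))) - d + 1) 0 ^ (d - 1) ≤ ψ (∑ i, psiInv ψ (u i)) := by
  obtain ⟨hcont, -, hψ0, -, hrange, -⟩ := hψ
  set c := 1 / ((d : ℝ) - 1)
  have hd1 : (1 : ℝ) ≤ (d : ℝ) - 1 := by
    have : (2 : ℝ) ≤ d := by exact_mod_cast hd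
    linarith
  have hc : 0 < c := by positivity
  have hx : ∀ i, 0 ≤ psiInv ψ (u i) := fun i => psiInv_nonneg ψ (u i)
  have hsum : 0 ≤ ∑ i, psiInv ψ (u i) := Finset.sum_nonneg fun i _ => hx i
  have hsuper := hconv.sum_sub_map_zero_le Finset.univ fun i _ => hx i
  simp only [hψ0, Real.one_rpow, Finset.sum_sub_distrib, Finset.sum_const, Finset.card_univ,
    Fintype.card_fin, nsmul_eq_mul, mul_one] at hsuper
  have hu_le : ∀ i, u i ^ c ≤ ψ (psiInv ψ (u i)) ^ c := fun i =>
    Real.rpow_le_rpow (hu i).1 (le_psi_psiInv hcont hψ0 (hu i).2) hc.le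
  have hmax : max ((∑ i, u i ^ c) - d + 1) 0 ≤ ψ (∑ i, psiInv ψ (u i)) ^ c :=
    max_le (by linarith [Finset.sum_le_sum fun i (_ : i ∈ Finset.univ) => hu_le i])
      (Real.rpow_nonneg (hrange _ hsum).1 _)
  calc max ((∑ i, u i ^ c) - d + 1) 0 ^ (d - 1)
      ≤ (ψ (∑ i, psiInv ψ (u i)) ^ c) ^ (d - 1) := pow_le_pow_left₀ (le_max_right _ _) hmax _
    _ = ψ (∑ i, psiInv ψ (u i)) := by
      rw [← Real.rpow_natCast, ← Real.rpow_mul (hrange _ hsum).1, Nat.cast_sub (by omega),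
        Nat.cast_one, one_div_mul_cancel (by linarith), Real.rpow_one]

/-- For a `d`-monotone generator `ψ` with `d ≥ 3`, the function `f(x) = 1 - ψ(x)^{1/(d-1)}`
is concave on `(0, ψ⁻¹(0)) = {x > 0 : ψ(x) > 0}`; consequently the Archimedean copula
generated by `ψ` dominates pointwise the lower bound `C_d^L` generated by
`ψ_d^L(x) = (1-x)₊^(d-1)`. -/
theorem stmt19 (d : ℕ) (hd : 3 ≤ d) (ψ : ℝ → ℝ) (hψ : IsArchGen ψ)
    (hmon : DMonotoneOn d ψ) :
    ConcaveOn ℝ {x : ℝ | 0 < x ∧ 0 < ψ x}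
      (fun x => 1 - ψ x ^ (1/((d:ℝ) - 1))) ∧
    ∀ u : Fin d → ℝ, (∀ i, u i ∈ Set.Icc (0:ℝ) 1) →
      max ((∑ i, u i ^ (1/((d:ℝ) - 1))) - d + 1) 0 ^ (d - 1)
        ≤ ψ (∑ i, psiInv ψ (u i)) := by
  have hconv := hmon.convexOn_rpow (by omega)
  have hS : Convex ℝ {x : ℝ | 0 < x ∧ 0 < ψ x} := Set.OrdConnected.convex
    ⟨fun x hx y hy z hz => ⟨hx.1.trans_le hz.1,
      hy.2.trans_le (hψ.2.1 (hx.1.le.trans hz.1) (hx.1.le.trans (hz.1.trans hz.2)) hz.2)⟩⟩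
  exact ⟨(concaveOn_const 1 hS).sub (hconv.subset (fun x hx => le_of_lt hx.1) hS),
    hψ.lowerCopula_le (by omega) hconv⟩
end
end
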